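/- arXiv:1505.04129 — 11 statements merged into one kernel-verified Lean document; each statement's English description precedes it below -/
import Mathlib

section
/- Let K be a nonempty closed convex cone in X. Then (K^⊖)^⊥ = K ∩ (−K), where (K^⊖)^⊥ is the orthogonal complement of the polar cone of K. -/
open Filter Topology

variable {X : Type*} [NormedAddCommGroup X] [InnerProductSpace ℝ X] [FiniteDimensional ℝ X]

/-- The polar cone `S^⊖ = {x : ⟪x, s⟫ ≤ 0 for all s ∈ S}`. -/
def polarCone (S : Set X) : Set X := {x : X | ∀ s ∈ S, (inner ℝ x s : ℝ) ≤ 0}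

/-- The orthogonal complement `S^⊥ = {x : ⟪x, s⟫ = 0 for all s ∈ S}` of a set. -/
def perpSet (S : Set X) : Set X := {x : X | ∀ s ∈ S, (inner ℝ x s : ℝ) = 0}

/-! By the bipolar theorem (Farkas' lemma) a nonempty closed convex cone satisfies
`K = (K^⊖)^⊖`, and `x ⊥ K^⊖` says exactly that both `x` and `-x` lie in `(K^⊖)^⊖`. -/

lemma ConvexCone.coe_hull_eq_self {𝕜 E : Type*} [Field 𝕜] [LinearOrder 𝕜] [IsStrictOrderedRing 𝕜]
    [AddCommGroup E] [Module 𝕜 E] {s : Set E} (hs : Convex 𝕜 s)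
    (hsmul : ∀ r : 𝕜, 0 < r → ∀ x ∈ s, r • x ∈ s) : (hull 𝕜 s : Set E) = s := by
  refine subset_hull.antisymm' fun x hx => ?_
  obtain ⟨r, hr, y, hy, rfl⟩ := (mem_hull_of_convex hs).1 hx
  exact hsmul r hr y hy

lemma ProperCone.exists_coe_eq {E : Type*} [AddCommGroup E] [Module ℝ E] [TopologicalSpace E]
    [ContinuousSMul ℝ E] {K : Set E} (hne : K.Nonempty) (hcl : IsClosed K) (hconv : Convex ℝ K)
    (hsmul : ∀ r : ℝ, 0 < r → ∀ x ∈ K, r • x ∈ K) : ∃ C : ProperCone ℝ E, (C : Set E) = K := by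
  have hK := ConvexCone.coe_hull_eq_self hconv hsmul
  lift ConvexCone.hull ℝ K to ProperCone ℝ E with C
  · rw [hK]; exact ⟨hne, hcl⟩
  exact ⟨C, hK⟩

section Polar

variable {E : Type*} [NormedAddCommGroup E] [InnerProductSpace ℝ E] {S : Set E} {x : E}

lemma mem_perpSet_iff : x ∈ perpSet S ↔ x ∈ polarCone S ∧ -x ∈ polarCone S := by
  simp only [perpSet, polarCone, Set.mem_ofPred_eq, inner_neg_left, neg_nonpos, ← forall_and,
    le_antisymm_iff]

lemma polarCone_neg : polarCone (-S) = -polarCone S := by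
  ext x
  simp [polarCone, inner_neg_right]

variable [CompleteSpace E]

lemma polarCone_eq_neg_innerDual : polarCone S = -(ProperCone.innerDual S : Set E) := by
  ext x
  simp [polarCone, real_inner_comm]

lemma polarCone_polarCone (C : ProperCone ℝ E) : polarCone (polarCone (C : Set E)) = C := by
  rw [polarCone_eq_neg_innerDual (S := (C : Set E)), polarCone_neg, polarCone_eq_neg_innerDual,
    neg_neg, ProperCone.innerDual_innerDual]

end Polar

/-- For a nonempty closed convex cone `K`, `(K^⊖)^⊥ = K ∩ (−K)`. -/
theorem stmt1 (K : Set X) (hne : K.Nonempty) (hcl : IsClosed K) (hconv : Convex ℝ K)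
    (hcone : ∀ t : ℝ, 0 ≤ t → ∀ x ∈ K, t • x ∈ K) :
    perpSet (polarCone K) = K ∩ (-K) := by
  obtain ⟨C, rfl⟩ := ProperCone.exists_coe_eq hne hcl hconv fun t ht => hcone t ht.le
  ext x
  rw [mem_perpSet_iff, polarCone_polarCone]
  rfl
end

section
/- Let A and B be nonempty closed convex subsets of X, and let U := {u ∈ X : u ≠ 0 and ⟪a, u⟫ ≤ ⟪b, u⟫ for all a ∈ A and all b ∈ B}. Then for every u ∈ U one has (rec A) ∩ (rec B) ⊆ {u}^⊥, i.e. every vector in (rec A) ∩ (rec B) is orthogonal to every separating functional u. -/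
/-
A common recession direction `x` lets `A` and `B` be shifted by `n • x` for every `n`; the
separation inequality `⟪a + n • x, u⟫ ≤ ⟪b, u⟫` then forces `⟪x, u⟫ ≤ 0`, and the symmetric
one `⟪a, u⟫ ≤ ⟪b + n • x, u⟫` forces `0 ≤ ⟪x, u⟫`.
-/

open Filter Topology

variable {X : Type*} [NormedAddCommGroup X] [InnerProductSpace ℝ X] [FiniteDimensional ℝ X]

/-- The recession cone `rec S = {x : x + S ⊆ S}` of a set `S`. -/
def recCone (S : Set X) : Set X := {x : X | ∀ s ∈ S, x + s ∈ S}

theorem nonpos_of_forall_natCast_mul_le {α : Type*} [Field α] [LinearOrder α]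
    [IsStrictOrderedRing α] [Archimedean α] {c d : α} (h : ∀ n : ℕ, n * c ≤ d) : c ≤ 0 := by
  by_contra! hc
  obtain ⟨n, hn⟩ := exists_nat_gt (d / c)
  rw [div_lt_iff₀ hc] at hn
  exact (h n).not_gt hn

omit [FiniteDimensional ℝ X] in
theorem natCast_smul_add_mem_of_mem_recCone {S : Set X} {x s : X} (hx : x ∈ recCone S)
    (hs : s ∈ S) (n : ℕ) : (n : ℝ) • x + s ∈ S := by
  induction n with
  | zero => simpa using hs
  | succ k ih =>
    convert hx _ ih using 1
    rw [Nat.cast_succ, add_smul, one_smul]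
    abel

omit [FiniteDimensional ℝ X] in
theorem inner_nonpos_of_mem_recCone_of_separates {A B : Set X} {u x a b : X}
    (hsep : ∀ a ∈ A, ∀ b ∈ B, inner ℝ a u ≤ inner ℝ b u) (hx : x ∈ recCone A)
    (ha : a ∈ A) (hb : b ∈ B) : inner ℝ x u ≤ 0 := by
  refine nonpos_of_forall_natCast_mul_le (d := inner ℝ b u - inner ℝ a u) fun n ↦ ?_
  have := hsep _ (natCast_smul_add_mem_of_mem_recCone hx ha n) b hb
  rw [inner_add_left, real_inner_smul_left] at this
  linarith

theorem stmt3_general (A B : Set X) (hAne : A.Nonempty) (hBne : B.Nonempty) :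
    ∀ u ∈ {u : X | u ≠ 0 ∧ ∀ a ∈ A, ∀ b ∈ B, (inner ℝ a u : ℝ) ≤ (inner ℝ b u : ℝ)},
      recCone A ∩ recCone B ⊆ {x : X | (inner ℝ x u : ℝ) = 0} := by
  rintro u ⟨-, hsep⟩ x ⟨hxA, hxB⟩
  obtain ⟨a, ha⟩ := hAne
  obtain ⟨b, hb⟩ := hBne
  have hsep_neg : ∀ b ∈ B, ∀ a ∈ A, inner ℝ b (-u) ≤ inner ℝ a (-u) := fun b hb a ha ↦ by
    simpa only [inner_neg_right, neg_le_neg_iff] using hsep a ha b hb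
  have h_nonneg : 0 ≤ inner ℝ x u := by
    simpa only [inner_neg_right, neg_nonpos] using
      inner_nonpos_of_mem_recCone_of_separates hsep_neg hxB hb ha
  exact le_antisymm (inner_nonpos_of_mem_recCone_of_separates hsep hxA ha hb) h_nonneg

/-- Every vector in `(rec A) ∩ (rec B)` is orthogonal to every
oriented functional separating `A` and `B`. -/
theorem stmt3 (A B : Set X) (hAne : A.Nonempty) (hAcl : IsClosed A) (hAconv : Convex ℝ A)
    (hBne : B.Nonempty) (hBcl : IsClosed B) (hBconv : Convex ℝ B) :
    ∀ u ∈ {u : X | u ≠ 0 ∧ ∀ a ∈ A, ∀ b ∈ B, (inner ℝ a u : ℝ) ≤ (inner ℝ b u : ℝ)},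
      recCone A ∩ recCone B ⊆ {x : X | (inner ℝ x u : ℝ) = 0} :=
  stmt3_general A B hAne hBne
end

section
/- Let A and B be nonempty closed convex subsets of X, and let U := {u ∈ X : u ≠ 0 and ⟪a, u⟫ ≤ ⟪b, u⟫ for all a ∈ A and all b ∈ B}. Then the intersection ⋂_{u ∈ U} {u}^⊥ (interpreted as all of X when U is empty) equals ccone(A − B) ∩ ccone(B − A), where A − B := {a − b : a ∈ A, b ∈ B}. -/
open Filter Topology Pointwise

variable {X : Type*} [NormedAddCommGroup X] [InnerProductSpace ℝ X] [FiniteDimensional ℝ X]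

/-- `ccone S`: the smallest closed convex cone containing the convex set `S`, i.e. the
closure of the set of nonnegative multiples of elements of `S`. -/
def ccone (S : Set X) : Set X := closure {y : X | ∃ t : ℝ, 0 ≤ t ∧ ∃ s ∈ S, y = t • s}

/-!
Write `C := A - B`. A vector `u` separates `A` from `B` exactly when `-u` lies in the inner dual
cone of `C`, and since `C` is convex and nonempty, the bipolar theorem identifies `ccone C` with
the inner dual of that dual cone. So `x` lies in `ccone (A - B)` iff `⟪x, u⟫ ≤ 0` for every
separating `u`, and symmetrically `x` lies in `ccone (B - A)` iff `⟪x, u⟫ ≥ 0` for every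
separating `u`. Both hold iff `x ⊥ u` for all of them; the excluded `u = 0` is orthogonal to
everything anyway.
-/

open RealInnerProductSpace

theorem PointedCone.coe_hull_of_convex {E : Type*} [AddCommGroup E] [Module ℝ E] {S : Set E}
    (hS : Convex ℝ S) (hSne : S.Nonempty) :
    (hull ℝ S : Set E) = {y | ∃ t : ℝ, 0 ≤ t ∧ ∃ s ∈ S, y = t • s} := by
  refine subset_antisymm (fun y hy => ?_) ?_
  · induction hy using Submodule.span_induction with
    | mem s hs => exact ⟨1, zero_le_one, s, hs, (one_smul ℝ s).symm⟩
    | zero =>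
      obtain ⟨s, hs⟩ := hSne
      exact ⟨0, le_rfl, s, hs, (zero_smul ℝ s).symm⟩
    | add y z _ _ hy hz =>
      obtain ⟨t, ht, s, hs, rfl⟩ := hy
      obtain ⟨t', ht', s', hs', rfl⟩ := hz
      have hmem : t • s + t' • s' ∈ (t + t') • S := by
        rw [hS.add_smul ht ht']
        exact Set.add_mem_add (Set.smul_mem_smul_set hs) (Set.smul_mem_smul_set hs')
      obtain ⟨s'', hs'', h⟩ := hmem
      exact ⟨t + t', add_nonneg ht ht', s'', hs'', h.symm⟩
    | smul c y _ hy =>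
      obtain ⟨t, ht, s, hs, rfl⟩ := hy
      exact ⟨c * t, mul_nonneg c.2 ht, s, hs, by rw [mul_smul]; rfl⟩
  · rintro _ ⟨t, ht, s, hs, rfl⟩
    exact (hull ℝ S).smul_mem ht (subset_hull hs)

section InnerDual

variable {E : Type*} [NormedAddCommGroup E] [InnerProductSpace ℝ E] [CompleteSpace E]

namespace ProperCone

theorem innerDual_hull (S : Set E) :
    innerDual (PointedCone.hull ℝ S : Set E) = innerDual S :=
  toPointedCone_injective (PointedCone.dual_hull S)

theorem coe_innerDual_innerDual (S : Set E) :
    (innerDual (innerDual S : Set E) : Set E) = closure (PointedCone.hull ℝ S) := by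
  let C : ProperCone ℝ E := Submodule.closure (PointedCone.hull ℝ S)
  have hdual : innerDual S = innerDual (C : Set E) := by
    refine le_antisymm (fun v hv => ?_)
      (innerDual_le_innerDual <| subset_closure.trans' PointedCone.subset_hull)
    rw [← innerDual_hull] at hv
    have hclosed : IsClosed {x : E | 0 ≤ ⟪x, v⟫} :=
      isClosed_le continuous_const (continuous_id.inner continuous_const)
    exact fun x hx => closure_minimal (fun y hy => mem_innerDual.1 hv hy) hclosed hx
  rw [hdual]
  exact congrArg SetLike.coe (innerDual_innerDual C)

end ProperCone

theorem ccone_eq_innerDual_innerDual {S : Set E} (hS : Convex ℝ S) (hSne : S.Nonempty) :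
    ccone S = ProperCone.innerDual (ProperCone.innerDual S : Set E) := by
  rw [ProperCone.coe_innerDual_innerDual, PointedCone.coe_hull_of_convex hS hSne, ccone]

theorem mem_ccone_sub_iff_forall_inner_nonneg {A B : Set E} (hAne : A.Nonempty)
    (hAconv : Convex ℝ A) (hBne : B.Nonempty) (hBconv : Convex ℝ B) {x : E} :
    x ∈ ccone (B - A) ↔ ∀ u, (∀ a ∈ A, ∀ b ∈ B, ⟪a, u⟫ ≤ ⟪b, u⟫) → 0 ≤ ⟪x, u⟫ := by
  rw [ccone_eq_innerDual_innerDual (hBconv.sub hAconv) (hBne.sub hAne)]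
  simp only [SetLike.mem_coe, ProperCone.mem_innerDual, ← Set.image2_sub, Set.forall_mem_image2,
    inner_sub_left, sub_nonneg, real_inner_comm x]
  exact forall_congr' fun u => imp_congr_left forall₂_comm

theorem mem_ccone_sub_iff_forall_inner_nonpos {A B : Set E} (hAne : A.Nonempty)
    (hAconv : Convex ℝ A) (hBne : B.Nonempty) (hBconv : Convex ℝ B) {x : E} :
    x ∈ ccone (A - B) ↔ ∀ u, (∀ a ∈ A, ∀ b ∈ B, ⟪a, u⟫ ≤ ⟪b, u⟫) → ⟪x, u⟫ ≤ 0 := by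
  rw [mem_ccone_sub_iff_forall_inner_nonneg hBne hBconv hAne hAconv,
    (Equiv.neg E).forall_congr_left]
  simp only [Equiv.neg_symm, Equiv.neg_apply, inner_neg_right, neg_le_neg_iff, neg_nonneg]
  exact forall_congr' fun u => imp_congr_left forall₂_comm

end InnerDual

theorem stmt4_general (A B : Set X) (hAne : A.Nonempty) (hAconv : Convex ℝ A)
    (hBne : B.Nonempty) (hBconv : Convex ℝ B) :
    (⋂ u ∈ {u : X | u ≠ 0 ∧ ∀ a ∈ A, ∀ b ∈ B, (inner ℝ a u : ℝ) ≤ (inner ℝ b u : ℝ)},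
      {x : X | (inner ℝ x u : ℝ) = 0})
      = ccone (A - B) ∩ ccone (B - A) := by
  ext x
  simp only [Set.mem_iInter, Set.mem_ofPred_eq, Set.mem_inter_iff,
    mem_ccone_sub_iff_forall_inner_nonpos hAne hAconv hBne hBconv,
    mem_ccone_sub_iff_forall_inner_nonneg hAne hAconv hBne hBconv]
  constructor
  · intro h
    have horth : ∀ u, (∀ a ∈ A, ∀ b ∈ B, ⟪a, u⟫ ≤ ⟪b, u⟫) → ⟪x, u⟫ = 0 := fun u hu =>
      (eq_or_ne u 0).elim (fun hu0 => by simp [hu0]) fun hu0 => h u ⟨hu0, hu⟩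
    exact ⟨fun u hu => (horth u hu).le, fun u hu => (horth u hu).ge⟩
  · rintro ⟨hle, hge⟩ u ⟨-, hu⟩
    exact le_antisymm (hle u hu) (hge u hu)

/-- The intersection of the hyperplanes `{u}^⊥` over all oriented
separating functionals `u` (all of `X` if there are none) equals
`ccone (A − B) ∩ ccone (B − A)`. -/
theorem stmt4 (A B : Set X) (hAne : A.Nonempty) (hAcl : IsClosed A) (hAconv : Convex ℝ A)
    (hBne : B.Nonempty) (hBcl : IsClosed B) (hBconv : Convex ℝ B) :
    (⋂ u ∈ {u : X | u ≠ 0 ∧ ∀ a ∈ A, ∀ b ∈ B, (inner ℝ a u : ℝ) ≤ (inner ℝ b u : ℝ)},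
      {x : X | (inner ℝ x u : ℝ) = 0})
      = ccone (A - B) ∩ ccone (B - A) :=
  stmt4_general A B hAne hAconv hBne hBconv
end

section
/- Let A and B be nonempty closed convex subsets of X with A ∩ B = ∅. Then there exists u ∈ X with u ≠ 0 such that ⟪a, u⟫ ≤ ⟪b, u⟫ for all a ∈ A and all b ∈ B, and moreover (rec A) ∩ (rec B) ⊆ {u}^⊥; in particular, (rec A) ∩ (rec B) is a nonempty closed convex cone contained in a proper hyperplane of X. -/
/-!
In finite dimensions a convex set missing `0` lies in a closed half-space through `0`; applied
to `B - A` this gives a nonzero `u` with `⟪a, u⟫ ≤ ⟪b, u⟫`. If `x` recedes in both `A` and `B`,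
then `⟪a, u⟫ + n ⟪x, u⟫ ≤ ⟪b, u⟫` and `⟪a, u⟫ ≤ ⟪b, u⟫ + n ⟪x, u⟫` for all `n : ℕ`,
which forces `⟪x, u⟫ = 0`.
-/

open Filter Topology
open scoped RealInnerProductSpace Pointwise

variable {X : Type*} [NormedAddCommGroup X] [InnerProductSpace ℝ X] [FiniteDimensional ℝ X]

/-- If `C` has empty interior it lies in a proper affine subspace, and a normal vector of that
subspace (with a suitable sign) works; otherwise `0 ∉ interior C` is separated from `C` by
Hahn–Banach. -/
theorem Convex.exists_ne_zero_forall_inner_nonneg {C : Set X} (hC : Convex ℝ C)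
    (hne : C.Nonempty) (h0 : (0 : X) ∉ C) : ∃ u : X, u ≠ 0 ∧ ∀ c ∈ C, 0 ≤ ⟪c, u⟫ := by
  rcases (interior C).eq_empty_or_nonempty with hint | hint
  · have hspan : vectorSpan ℝ C ≠ ⊤ := by
      rw [← direction_affineSpan, Ne,
        AffineSubspace.direction_eq_top_iff_of_nonempty (hne.mono (subset_affineSpan ℝ C)),
        ← hC.interior_nonempty_iff_affineSpan_eq_top, hint]
      exact Set.not_nonempty_empty
    obtain ⟨v, hv, hv0⟩ :=
      (Submodule.ne_bot_iff _).mp (mt Submodule.orthogonal_eq_bot_iff.mp hspan)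
    obtain ⟨c₀, hc₀⟩ := hne
    have hconst : ∀ c ∈ C, ⟪c, v⟫ = ⟪c₀, v⟫ := fun c hc => by
      have := Submodule.inner_right_of_mem_orthogonal (vsub_mem_vectorSpan ℝ hc hc₀) hv
      rwa [vsub_eq_sub, inner_sub_left, sub_eq_zero] at this
    rcases le_total 0 ⟪c₀, v⟫ with h | h
    · exact ⟨v, hv0, fun c hc => (hconst c hc).symm ▸ h⟩
    · exact ⟨-v, neg_ne_zero.mpr hv0, fun c hc => by rw [inner_neg_right, hconst c hc]; linarith⟩
  · obtain ⟨f, hf0, hf⟩ :=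
      geometric_hahn_banach_of_nonempty_interior_point hC (fun h => h0 (interior_subset h)) hint
    refine ⟨-(InnerProductSpace.toDual ℝ X).symm f, by simpa using hf0, fun c hc => ?_⟩
    rw [inner_neg_right, real_inner_comm, InnerProductSpace.toDual_symm_apply]
    simpa using hf c hc

theorem exists_ne_zero_forall_inner_le_of_disjoint {A B : Set X} (hA : Convex ℝ A)
    (hB : Convex ℝ B) (hAne : A.Nonempty) (hBne : B.Nonempty) (hAB : Disjoint A B) :
    ∃ u : X, u ≠ 0 ∧ ∀ a ∈ A, ∀ b ∈ B, ⟪a, u⟫ ≤ ⟪b, u⟫ := by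
  have h0 : (0 : X) ∉ B - A := by
    rintro ⟨b, hb, a, ha, hab⟩
    exact Set.disjoint_left.mp hAB ha (sub_eq_zero.mp hab ▸ hb)
  obtain ⟨u, hu0, hu⟩ := (hB.sub hA).exists_ne_zero_forall_inner_nonneg (hBne.sub hAne) h0
  exact ⟨u, hu0, fun a ha b hb => by simpa [inner_sub_left] using hu _ (Set.sub_mem_sub hb ha)⟩

section recCone

variable {E : Type*} [NormedAddCommGroup E] {S : Set E} {x y : E}

theorem zero_mem_recCone (S : Set E) : (0 : E) ∈ recCone S := fun s hs => by simpa using hs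

theorem add_mem_recCone (hx : x ∈ recCone S) (hy : y ∈ recCone S) : x + y ∈ recCone S :=
  fun s hs => by simpa only [add_assoc] using hx _ (hy s hs)

theorem nsmul_mem_recCone (hx : x ∈ recCone S) (n : ℕ) : n • x ∈ recCone S := by
  induction n with
  | zero => simpa using zero_mem_recCone S
  | succ n ih => simpa only [succ_nsmul] using add_mem_recCone ih hx

theorem smul_mem_recCone [Module ℝ E] (hS : Convex ℝ S) (hx : x ∈ recCone S) {t : ℝ} (ht : 0 ≤ t) :
    t • x ∈ recCone S := by
  intro s hs
  rcases ht.eq_or_lt with rfl | ht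
  · simpa using hs
  obtain ⟨n, hn⟩ := exists_nat_ge t
  have hn0 : (0 : ℝ) < n := ht.trans_le hn
  -- `t • x` is a fraction `t / n ≤ 1` of the way from `s` to `n • x + s ∈ S`.
  have h := hS.add_smul_mem hs (by rw [add_comm]; exact nsmul_mem_recCone hx n s hs)
    ⟨div_nonneg ht.le hn0.le, div_le_one_of_le₀ hn hn0.le⟩
  rwa [← Nat.cast_smul_eq_nsmul ℝ, smul_smul, div_mul_cancel₀ _ hn0.ne', add_comm] at h

theorem isClosed_recCone (hS : IsClosed S) : IsClosed (recCone S) := by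
  have : recCone S = ⋂ s ∈ S, (· + s) ⁻¹' S := by ext; simp [recCone]
  rw [this]
  exact isClosed_biInter fun s _ => hS.preimage (continuous_add_const s)

theorem convex_recCone [Module ℝ E] (hS : Convex ℝ S) : Convex ℝ (recCone S) := by
  intro x hx y hy a b ha hb hab s hs
  convert hS (hx s hs) (hy s hs) ha hb hab using 1
  rw [smul_add, smul_add, add_add_add_comm, ← add_smul, hab, one_smul]

theorem inner_nonpos_of_mem_recCone [InnerProductSpace ℝ E] {A B : Set E} {u : E}
    (hsep : ∀ a ∈ A, ∀ b ∈ B, ⟪a, u⟫ ≤ ⟪b, u⟫) (hAne : A.Nonempty) (hBne : B.Nonempty)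
    (hx : x ∈ recCone A) : ⟪x, u⟫ ≤ 0 := by
  obtain ⟨a, ha⟩ := hAne
  obtain ⟨b, hb⟩ := hBne
  by_contra! hpos
  obtain ⟨n, hn⟩ := exists_nat_gt ((⟪b, u⟫ - ⟪a, u⟫) / ⟪x, u⟫)
  have h := hsep _ (nsmul_mem_recCone hx n a ha) b hb
  rw [inner_add_left, ← Nat.cast_smul_eq_nsmul ℝ, real_inner_smul_left] at h
  rw [div_lt_iff₀ hpos] at hn
  linarith

end recCone

/-- If `A` and `B` are disjoint nonempty closed convex sets, then
there is a nonzero separating functional `u` with `(rec A) ∩ (rec B) ⊆ {u}^⊥`; in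
particular `(rec A) ∩ (rec B)` is a nonempty closed convex cone contained in the
proper hyperplane `{u}^⊥`. -/
theorem stmt5 (A B : Set X) (hAne : A.Nonempty) (hAcl : IsClosed A) (hAconv : Convex ℝ A)
    (hBne : B.Nonempty) (hBcl : IsClosed B) (hBconv : Convex ℝ B)
    (hdisj : A ∩ B = ∅) :
    (∃ u : X, u ≠ 0 ∧ (∀ a ∈ A, ∀ b ∈ B, (inner ℝ a u : ℝ) ≤ (inner ℝ b u : ℝ)) ∧
      recCone A ∩ recCone B ⊆ {x : X | (inner ℝ x u : ℝ) = 0}) ∧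
    (recCone A ∩ recCone B).Nonempty ∧
    IsClosed (recCone A ∩ recCone B) ∧
    Convex ℝ (recCone A ∩ recCone B) ∧
    (∀ t : ℝ, 0 ≤ t → ∀ x ∈ recCone A ∩ recCone B, t • x ∈ recCone A ∩ recCone B) := by
  refine ⟨?_, ⟨0, zero_mem_recCone A, zero_mem_recCone B⟩,
    (isClosed_recCone hAcl).inter (isClosed_recCone hBcl),
    (convex_recCone hAconv).inter (convex_recCone hBconv),
    fun t ht x hx => ⟨smul_mem_recCone hAconv hx.1 ht, smul_mem_recCone hBconv hx.2 ht⟩⟩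
  obtain ⟨u, hu0, hsep⟩ := exists_ne_zero_forall_inner_le_of_disjoint hAconv hBconv hAne hBne
    (Set.disjoint_iff_inter_eq_empty.mpr hdisj)
  have hsep' : ∀ b ∈ B, ∀ a ∈ A, ⟪b, -u⟫ ≤ ⟪a, -u⟫ := fun b hb a ha => by
    simpa only [inner_neg_right, neg_le_neg_iff] using hsep a ha b hb
  refine ⟨u, hu0, hsep, fun x ⟨hxA, hxB⟩ => le_antisymm ?_ ?_⟩
  · exact inner_nonpos_of_mem_recCone hsep hAne hBne hxA
  · simpa only [inner_neg_right, neg_nonpos] using inner_nonpos_of_mem_recCone hsep' hBne hAne hxB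
end

section
/- Let A and B be nonempty closed convex subsets of X and set T := P_B ∘ P_A. Then 0 lies in the closure of the range of Id − T. -/
open Filter Topology

open Pointwise RealInnerProductSpace

variable {X : Type*} [NormedAddCommGroup X] [InnerProductSpace ℝ X] [FiniteDimensional ℝ X]

/-- `P` is the projector onto the set `C`: `P x` is a point of `C` nearest to `x`. -/
def IsProjector (C : Set X) (P : X → X) : Prop :=
  ∀ x : X, P x ∈ C ∧ ∀ y ∈ C, ‖x - P x‖ ≤ ‖x - y‖

lemma IsProjector.inner_le_zero {C : Set X} (hC : Convex ℝ C) {P : X → X}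
    (hP : IsProjector C P) (x : X) : ∀ y ∈ C, ⟪x - P x, y - P x⟫ ≤ 0 := by
  have hmem := (hP x).1
  have : ‖x - P x‖ = ⨅ w : C, ‖x - w‖ := by
    haveI : Nonempty C := ⟨⟨P x, hmem⟩⟩
    refine le_antisymm (le_ciInf fun w => (hP x).2 w w.2) ?_
    exact ciInf_le ⟨0, Set.forall_mem_range.2 fun _ => norm_nonneg _⟩ (⟨P x, hmem⟩ : C)
  exact (norm_eq_iInf_iff_real_inner_le_zero hC hmem).mp this

/-- For `T = P_B ∘ P_A` with `A, B` nonempty closed convex sets,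
`0` lies in the closure of the range of `Id − T`. -/
theorem stmt6 (A B : Set X) (hAne : A.Nonempty) (hAcl : IsClosed A) (hAconv : Convex ℝ A)
    (hBne : B.Nonempty) (hBcl : IsClosed B) (hBconv : Convex ℝ B)
    (PA PB : X → X) (hPA : IsProjector A PA) (hPB : IsProjector B PB)
    (T : X → X) (hT : T = PB ∘ PA) :
    (0 : X) ∈ closure (Set.range fun x : X => x - T x) := by
  -- the set of differences and its closure
  set K : Set X := closure (B - A) with hK
  have hKconv : Convex ℝ K := (hBconv.sub hAconv).closure
  have hKne : K.Nonempty := (hBne.sub hAne).closure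
  have hKcl : IsClosed K := isClosed_closure
  obtain ⟨v, hvK, hvmin⟩ :=
    exists_norm_eq_iInf_of_complete_convex hKne hKcl.isComplete hKconv (0 : X)
  have hvchar : ∀ w ∈ K, ‖v‖ ^ 2 ≤ ⟪v, w⟫ := by
    intro w hw
    have := (norm_eq_iInf_iff_real_inner_le_zero hKconv hvK).mp hvmin w hw
    have h2 : ⟪-v, w - v⟫ ≤ 0 := by simpa using this
    have h3 : ⟪v, v⟫ ≤ ⟪v, w⟫ := by
      have := inner_sub_right (𝕜 := ℝ) v w v
      rw [inner_neg_left] at h2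
      linarith
    simpa [real_inner_self_eq_norm_sq] using h3
  -- a sequence in B - A converging to v
  obtain ⟨p, hp, hplim⟩ := mem_closure_iff_seq_limit.mp hvK
  choose b hb a ha hba using fun n => Set.mem_sub.mp (hp n)
  -- notation
  set a' : ℕ → X := fun n => PA (b n) with ha'
  set w : ℕ → X := fun n => b n - T (b n) with hw
  set u : ℕ → X := fun n => b n - a' n with hu
  have ha'A : ∀ n, a' n ∈ A := fun n => (hPA (b n)).1
  have hTb : ∀ n, T (b n) = PB (a' n) := fun n => by rw [hT]; rfl
  have hTbB : ∀ n, T (b n) ∈ B := fun n => by rw [hTb]; exact (hPB (a' n)).1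
  -- ‖u n‖ ≤ ‖p n‖
  have hunorm : ∀ n, ‖u n‖ ≤ ‖p n‖ := fun n => by
    rw [← hba n]; exact (hPA (b n)).2 (a n) (ha n)
  -- u n ∈ B - A ⊆ K, s n ∈ B - A ⊆ K
  have huK : ∀ n, u n ∈ K := fun n =>
    subset_closure (Set.sub_mem_sub (hb n) (ha'A n))
  have hsK : ∀ n, T (b n) - a' n ∈ K := fun n =>
    subset_closure (Set.sub_mem_sub (hTbB n) (ha'A n))
  -- key pointwise bound
  have key : ∀ n, ‖w n‖ ^ 2 ≤ ‖u n‖ ^ 2 - ‖v‖ ^ 2 + ‖u n - v‖ * ‖u n‖ := by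
    intro n
    set s : X := T (b n) - a' n with hs
    have hws : w n = u n - s := by
      simp only [hw, hu, hs]; abel
    -- ⟨s, w n⟩ ≥ 0
    have h1 : 0 ≤ ⟪s, w n⟫ := by
      have := hPB.inner_le_zero hBconv (a' n) (b n) (hb n)
      rw [← hTb n] at this
      have heq : ⟪a' n - T (b n), b n - T (b n)⟫ = -⟪s, w n⟫ := by
        rw [hs, hw]; rw [← inner_neg_left]; congr 1; abel
      rw [heq] at this; linarith
    -- ⟨u n, s⟩ ≥ ‖v‖² - ‖u n - v‖ * ‖s‖
    have hsnorm : ‖s‖ ≤ ‖u n‖ := by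
      rw [hs, hu]
      have := (hPB (a' n)).2 (b n) (hb n)
      rw [← hTb n] at this
      calc ‖T (b n) - a' n‖ = ‖a' n - T (b n)‖ := by rw [norm_sub_rev]
        _ ≤ ‖a' n - b n‖ := this
        _ = ‖b n - a' n‖ := by rw [norm_sub_rev]
    have h2 : ‖v‖ ^ 2 - ‖u n - v‖ * ‖u n‖ ≤ ⟪u n, s⟫ := by
      have hvs := hvchar s (hsK n)
      have hcs : ⟪u n - v, s⟫ ≥ -(‖u n - v‖ * ‖s‖) := by
        have := abs_real_inner_le_norm (u n - v) s
        have := neg_abs_le (⟪u n - v, s⟫)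
        linarith
      have hmul : ‖u n - v‖ * ‖s‖ ≤ ‖u n - v‖ * ‖u n‖ :=
        mul_le_mul_of_nonneg_left hsnorm (norm_nonneg _)
      have hsplit : ⟪u n, s⟫ = ⟪v, s⟫ + ⟪u n - v, s⟫ := by
        have hvu : v + (u n - v) = u n := by abel
        rw [← hvu, inner_add_left]
        simp [hvu]
      linarith
    -- combine
    have hexp : ‖w n‖ ^ 2 = ⟪u n, w n⟫ - ⟪s, w n⟫ := by
      rw [← real_inner_self_eq_norm_sq, ← inner_sub_left, ← hws]
    have hexp2 : ⟪u n, w n⟫ = ‖u n‖ ^ 2 - ⟪u n, s⟫ := by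
      rw [hws, inner_sub_right, real_inner_self_eq_norm_sq]
    linarith
  -- ‖u n - v‖² ≤ ‖p n‖² - ‖v‖²
  have hudiff : ∀ n, ‖u n - v‖ ^ 2 ≤ ‖p n‖ ^ 2 - ‖v‖ ^ 2 := by
    intro n
    have h1 := hvchar (u n) (huK n)
    have h2 : ‖u n - v‖ ^ 2 = ‖u n‖ ^ 2 - 2 * ⟪v, u n⟫ + ‖v‖ ^ 2 := by
      rw [← real_inner_self_eq_norm_sq, inner_sub_sub_self,
        real_inner_self_eq_norm_sq, real_inner_self_eq_norm_sq,
        real_inner_comm]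
      ring
    have h3 : ‖u n‖ ^ 2 ≤ ‖p n‖ ^ 2 :=
      pow_le_pow_left₀ (norm_nonneg _) (hunorm n) 2
    linarith
  -- limits
  have hpnorm : Tendsto (fun n => ‖p n‖ ^ 2 - ‖v‖ ^ 2) atTop (𝓝 0) := by
    have : Tendsto (fun n => ‖p n‖ ^ 2) atTop (𝓝 (‖v‖ ^ 2)) :=
      ((continuous_norm.pow 2).continuousAt.tendsto.comp hplim)
    rw [show (0:ℝ) = ‖v‖ ^ 2 - ‖v‖ ^ 2 by ring]; exact this.sub_const _
  have hudiff2 : Tendsto (fun n => ‖u n - v‖ ^ 2) atTop (𝓝 0) := by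
    refine squeeze_zero (fun n => by positivity) hudiff hpnorm
  have hudlim : Tendsto (fun n => ‖u n - v‖) atTop (𝓝 0) := by
    have := hudiff2.sqrt
    simpa [Real.sqrt_sq (norm_nonneg _)] using this
  have hulim : Tendsto u atTop (𝓝 v) := by
    rw [← tendsto_sub_nhds_zero_iff]
    exact tendsto_zero_iff_norm_tendsto_zero.mpr hudlim
  have hunlim : Tendsto (fun n => ‖u n‖) atTop (𝓝 ‖v‖) :=
    (continuous_norm.continuousAt.tendsto.comp hulim)
  have hrhs : Tendsto (fun n => ‖u n‖ ^ 2 - ‖v‖ ^ 2 + ‖u n - v‖ * ‖u n‖)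
      atTop (𝓝 0) := by
    have h1 : Tendsto (fun n => ‖u n‖ ^ 2) atTop (𝓝 (‖v‖ ^ 2)) := hunlim.pow 2
    have h2 := (h1.sub_const (‖v‖ ^ 2)).add (hudlim.mul hunlim)
    rw [show (0:ℝ) = ‖v‖ ^ 2 - ‖v‖ ^ 2 + 0 * ‖v‖ by ring]
    exact h2
  have hwsq : Tendsto (fun n => ‖w n‖ ^ 2) atTop (𝓝 0) :=
    squeeze_zero (fun n => by positivity) key hrhs
  have hwnorm : Tendsto (fun n => ‖w n‖) atTop (𝓝 0) := by
    have := hwsq.sqrt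
    simpa [Real.sqrt_sq (norm_nonneg _)] using this
  have hwlim : Tendsto w atTop (𝓝 0) :=
    tendsto_zero_iff_norm_tendsto_zero.mpr hwnorm
  exact mem_closure_of_tendsto hwlim
    (Filter.Eventually.of_forall fun n => ⟨b n, rfl⟩)
end

section
/- Let A and B be nonempty closed convex subsets of X, set T := P_B ∘ P_A, and suppose T has no fixed point. Fix x ∈ X and define b₀ := x, a_{n+1} := P_A(b_n), b_{n+1} := P_B(a_{n+1}) for all n ∈ ℕ. Let g be the unique point of the closed convex set closure(B − A) of minimal norm (i.e. the projection of 0 onto closure{b − a : b ∈ B, a ∈ A}). Then ‖a_n‖ → +∞, ‖b_n‖ → +∞, b_n − a_n → g (for n ≥ 1), and a_{n+1} − b_n → −g. -/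
/-!
Adding the Pythagoras inequalities of the two projections gives, for `p ∈ A` and `q ∈ B`,
`‖b (n+1) - a (n+1)‖² + ‖b (n+1) - q‖² ≤ ‖b n - q‖² + ‖q - p‖²`. Summing, the gaps
`‖b (n+1) - a (n+1)‖`, which decrease, have quadratic mean at most `‖q - p‖`, so their limit is
`‖g‖`. Points of a convex set whose norms tend to the minimal norm converge to the point of
minimal norm, hence `b n - a n → g` and `b n - a (n+1) → g`. So `T (b n) - b n → 0`; since `T` is
continuous without fixed points, this forces `‖b n‖ → ∞`, and `a (n+1)` stays within bounded
distance of `b n`.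
-/

open Filter Topology Pointwise

variable {X : Type*} [NormedAddCommGroup X] [InnerProductSpace ℝ X] [FiniteDimensional ℝ X]

open RealInnerProductSpace

theorem le_of_forall_nat_mul_le_add {s t c : ℝ} (h : ∀ N : ℕ, N * s ≤ c + N * t) : s ≤ t := by
  by_contra! hts
  obtain ⟨N, hN⟩ := exists_nat_gt (c / (s - t))
  have := h N
  rw [div_lt_iff₀ (sub_pos.2 hts)] at hN
  nlinarith

section

variable {E : Type*} [NormedAddCommGroup E]

-- A continuous map without fixed points moves the points of a closed ball by at least a
-- fixed positive amount.
theorem tendsto_norm_atTop_of_tendsto_sub_nhds_zero [ProperSpace E] {T : E → E}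
    (hT : Continuous T) (hfix : ∀ x, T x ≠ x) {ι : Type*} {l : Filter ι} {y : ι → E}
    (hy : Tendsto (fun i => T (y i) - y i) l (𝓝 0)) : Tendsto (fun i => ‖y i‖) l atTop := by
  refine tendsto_atTop.2 fun R => ?_
  rcases (Metric.closedBall (0 : E) R).eq_empty_or_nonempty with hR | hR
  · refine Eventually.of_forall fun i => ?_
    have : y i ∉ Metric.closedBall (0 : E) R := hR ▸ Set.notMem_empty _
    simp only [Metric.mem_closedBall, dist_zero_right, not_le] at this
    exact this.le
  obtain ⟨z, -, hz⟩ := (isCompact_closedBall (0 : E) R).exists_isMinOn hR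
    (f := fun x => ‖T x - x‖) (by fun_prop)
  have hpos : 0 < ‖T z - z‖ := norm_pos_iff.2 (sub_ne_zero.2 (hfix z))
  filter_upwards [(tendsto_norm_zero.comp hy).eventually (gt_mem_nhds hpos)] with i hi
  by_contra! hiR
  exact (hz (by simpa using hiR.le)).not_gt hi

variable {A B : Set E} {PA PB : E → E} {a b : ℕ → E}

theorem norm_b_sub_a_succ_le (hPA : IsProjector A PA) (ha : ∀ n, a (n + 1) = PA (b n)) (n : ℕ) :
    ‖b (n + 1) - a (n + 2)‖ ≤ ‖b (n + 1) - a (n + 1)‖ := by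
  rw [ha (n + 1)]
  exact (hPA _).2 _ (ha n ▸ (hPA _).1)

theorem norm_b_succ_sub_a_le (hPB : IsProjector B PB) (hb : ∀ n, b (n + 1) = PB (a (n + 1)))
    (n : ℕ) : ‖b (n + 2) - a (n + 2)‖ ≤ ‖b (n + 1) - a (n + 2)‖ := by
  rw [norm_sub_rev, norm_sub_rev (b _), hb (n + 1)]
  exact (hPB _).2 _ (hb n ▸ (hPB _).1)

variable [InnerProductSpace ℝ E]

theorem real_inner_sub_nonpos_of_forall_norm_sub_le {K : Set E} (hK : Convex ℝ K) {u v : E}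
    (hv : v ∈ K) (hmin : ∀ w ∈ K, ‖u - v‖ ≤ ‖u - w‖) {w : E} (hw : w ∈ K) :
    ⟪u - v, w - v⟫ ≤ 0 := by
  have : Nonempty K := ⟨⟨v, hv⟩⟩
  refine (norm_eq_iInf_iff_real_inner_le_zero hK hv).1 (le_antisymm ?_ ?_) w hw
  · exact le_ciInf fun w => hmin w w.2
  · exact ciInf_le ⟨0, by rintro _ ⟨w, rfl⟩; exact norm_nonneg (u - w)⟩ (⟨v, hv⟩ : K)

theorem sq_norm_sub_le_of_forall_norm_le {K : Set E} (hK : Convex ℝ K) {g : E} (hg : g ∈ K)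
    (hmin : ∀ y ∈ K, ‖g‖ ≤ ‖y‖) {y : E} (hy : y ∈ K) : ‖y - g‖ ^ 2 ≤ ‖y‖ ^ 2 - ‖g‖ ^ 2 := by
  have h := real_inner_sub_nonpos_of_forall_norm_sub_le hK hg (u := 0)
    (by simpa only [zero_sub, norm_neg] using hmin) hy
  have hexp : ‖y‖ ^ 2 = ‖y - g‖ ^ 2 + 2 * ⟪y - g, g⟫ + ‖g‖ ^ 2 := by
    rw [← norm_add_sq_real, sub_add_cancel]
  rw [zero_sub, inner_neg_left, real_inner_comm] at h
  linarith

theorem tendsto_of_tendsto_norm_of_forall_norm_le {ι : Type*} {l : Filter ι} {K : Set E}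
    (hK : Convex ℝ K) {g : E} (hg : g ∈ K) (hmin : ∀ y ∈ K, ‖g‖ ≤ ‖y‖) {y : ι → E}
    (hyK : ∀ i, y i ∈ K) (hy : Tendsto (fun i => ‖y i‖) l (𝓝 ‖g‖)) : Tendsto y l (𝓝 g) := by
  rw [tendsto_iff_norm_sub_tendsto_zero]
  have hsq : Tendsto (fun i => ‖y i - g‖ ^ 2) l (𝓝 0) := by
    refine squeeze_zero (fun i => sq_nonneg _)
      (fun i => sq_norm_sub_le_of_forall_norm_le hK hg hmin (hyK i)) ?_
    rw [← sub_self (‖g‖ ^ 2)]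
    exact (hy.pow 2).sub_const _
  simpa using hsq.sqrt

namespace IsProjector

variable {C : Set E} {P : E → E}

theorem inner_sub_nonpos (hC : Convex ℝ C) (hP : IsProjector C P) (x : E) {c : E}
    (hc : c ∈ C) : ⟪x - P x, c - P x⟫ ≤ 0 :=
  real_inner_sub_nonpos_of_forall_norm_sub_le hC (hP x).1 (hP x).2 hc

theorem sq_norm_sub_add_sq_norm_sub_le (hC : Convex ℝ C) (hP : IsProjector C P) (x : E)
    {c : E} (hc : c ∈ C) : ‖x - P x‖ ^ 2 + ‖P x - c‖ ^ 2 ≤ ‖x - c‖ ^ 2 := by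
  have h := hP.inner_sub_nonpos hC x hc
  rw [show x - c = (x - P x) - (c - P x) by abel, norm_sub_sq_real (x - P x),
    norm_sub_rev (P x)]
  linarith

theorem sq_norm_sub_le_inner (hC : Convex ℝ C) (hP : IsProjector C P) (x y : E) :
    ‖P x - P y‖ ^ 2 ≤ ⟪x - y, P x - P y⟫ := by
  have hx := hP.inner_sub_nonpos hC x (hP y).1
  have hy := hP.inner_sub_nonpos hC y (hP x).1
  rw [← real_inner_self_eq_norm_sq]
  simp only [inner_sub_left, inner_sub_right, real_inner_comm] at *
  linarith

theorem lipschitzWith_one (hC : Convex ℝ C) (hP : IsProjector C P) : LipschitzWith 1 P := by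
  refine LipschitzWith.of_dist_le_mul fun x y => ?_
  rw [NNReal.coe_one, one_mul, dist_eq_norm, dist_eq_norm]
  have h := (hP.sq_norm_sub_le_inner hC x y).trans (real_inner_le_norm _ _)
  nlinarith [norm_nonneg (P x - P y), norm_nonneg (x - y)]

end IsProjector

-- Sum of the two Pythagoras inequalities; the slack is `‖(x - PA x) - (q - p)‖ ^ 2`.
theorem sq_norm_proj_comp_sub_add_le (hA : Convex ℝ A) (hB : Convex ℝ B)
    (hPA : IsProjector A PA) (hPB : IsProjector B PB) (x : E) {p q : E} (hp : p ∈ A)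
    (hq : q ∈ B) :
    ‖PB (PA x) - PA x‖ ^ 2 + ‖PB (PA x) - q‖ ^ 2 ≤ ‖x - q‖ ^ 2 + ‖q - p‖ ^ 2 := by
  have hpA := hPA.sq_norm_sub_add_sq_norm_sub_le hA x hp
  have hpB := hPB.sq_norm_sub_add_sq_norm_sub_le hB (PA x) hq
  have hslack := sq_nonneg ‖(x - PA x) - (q - p)‖
  rw [norm_sub_rev (PB (PA x)) (PA x)]
  simp only [← real_inner_self_eq_norm_sq, inner_sub_left, inner_sub_right,
    real_inner_comm] at *
  linarith

theorem sum_sq_norm_b_sub_a_le (hA : Convex ℝ A) (hB : Convex ℝ B)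
    (hPA : IsProjector A PA) (hPB : IsProjector B PB) (ha : ∀ n, a (n + 1) = PA (b n))
    (hb : ∀ n, b (n + 1) = PB (a (n + 1))) {p q : E} (hp : p ∈ A) (hq : q ∈ B) (N : ℕ) :
    ∑ n ∈ Finset.range N, ‖b (n + 1) - a (n + 1)‖ ^ 2 ≤ ‖b 0 - q‖ ^ 2 + N * ‖q - p‖ ^ 2 := by
  suffices h : ∑ n ∈ Finset.range N, ‖b (n + 1) - a (n + 1)‖ ^ 2 + ‖b N - q‖ ^ 2 ≤
      ‖b 0 - q‖ ^ 2 + N * ‖q - p‖ ^ 2 by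
    linarith [sq_nonneg ‖b N - q‖]
  induction N with
  | zero => simp
  | succ N ih =>
    have hstep := sq_norm_proj_comp_sub_add_le hA hB hPA hPB (b N) hp hq
    rw [← ha, ← hb] at hstep
    rw [Finset.sum_range_succ]
    push_cast
    linarith

theorem tendsto_norm_b_sub_a (hA : Convex ℝ A) (hB : Convex ℝ B)
    (hPA : IsProjector A PA) (hPB : IsProjector B PB) (ha : ∀ n, a (n + 1) = PA (b n))
    (hb : ∀ n, b (n + 1) = PB (a (n + 1))) {g : E} (hg : g ∈ closure (B - A))
    (hgmin : ∀ y ∈ closure (B - A), ‖g‖ ≤ ‖y‖) :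
    Tendsto (fun n => ‖b (n + 1) - a (n + 1)‖) atTop (𝓝 ‖g‖) := by
  set e : ℕ → ℝ := fun n => ‖b (n + 1) - a (n + 1)‖
  have he : Antitone e := antitone_nat_of_succ_le fun n =>
    (norm_b_succ_sub_a_le hPB hb n).trans (norm_b_sub_a_succ_le hPA ha n)
  have hbdd : BddBelow (Set.range e) := ⟨0, by rintro _ ⟨n, rfl⟩; exact norm_nonneg _⟩
  have hmem : ∀ n, b (n + 1) - a (n + 1) ∈ B - A := fun n =>
    Set.sub_mem_sub (hb n ▸ (hPB _).1) (ha n ▸ (hPA _).1)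
  have hle : ∀ n, ⨅ n, e n ≤ e n := ciInf_le hbdd
  have hL : 0 ≤ ⨅ n, e n := le_ciInf fun n => norm_nonneg _
  have hLle : ∀ y ∈ B - A, ⨅ n, e n ≤ ‖y‖ := by
    rintro _ ⟨q, hq, p, hp, rfl⟩
    refine (sq_le_sq₀ hL (norm_nonneg _)).1
      (le_of_forall_nat_mul_le_add (c := ‖b 0 - q‖ ^ 2) fun N => ?_)
    calc (N : ℝ) * (⨅ n, e n) ^ 2 = ∑ _n ∈ Finset.range N, (⨅ n, e n) ^ 2 := by simp
      _ ≤ ∑ n ∈ Finset.range N, e n ^ 2 :=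
        Finset.sum_le_sum fun n _ => pow_le_pow_left₀ hL (hle n) 2
      _ ≤ ‖b 0 - q‖ ^ 2 + N * ‖q - p‖ ^ 2 := sum_sq_norm_b_sub_a_le hA hB hPA hPB ha hb hp hq N
  have hLg : ⨅ n, e n = ‖g‖ := by
    refine le_antisymm ?_ (le_ciInf fun n => hgmin _ (subset_closure (hmem n)))
    exact closure_minimal hLle (isClosed_le continuous_const continuous_norm) hg
  exact hLg ▸ tendsto_atTop_ciInf he hbdd

end

theorem stmt8_general (A B : Set X) (hAconv : Convex ℝ A) (hBconv : Convex ℝ B)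
    (PA PB : X → X) (hPA : IsProjector A PA) (hPB : IsProjector B PB)
    (T : X → X) (hT : T = PB ∘ PA) (hfix : ∀ x : X, T x ≠ x)
    (x : X) (a b : ℕ → X)
    (ha : ∀ n : ℕ, a (n + 1) = PA (b n))
    (hb : ∀ n : ℕ, b (n + 1) = PB (a (n + 1)))
    (g : X) (hg : g ∈ closure (B - A))
    (hgmin : ∀ y ∈ closure (B - A), ‖g‖ ≤ ‖y‖) :
    Tendsto (fun n : ℕ => ‖a n‖) atTop atTop ∧
    Tendsto (fun n : ℕ => ‖b n‖) atTop atTop ∧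
    Tendsto (fun n : ℕ => b (n + 1) - a (n + 1)) atTop (nhds g) ∧
    Tendsto (fun n : ℕ => a (n + 1) - b n) atTop (nhds (-g)) := by
  have hK : Convex ℝ (closure (B - A)) := (hBconv.sub hAconv).closure
  have hmem : ∀ {p q : X}, p ∈ A → q ∈ B → q - p ∈ closure (B - A) := fun hp hq =>
    subset_closure (Set.sub_mem_sub hq hp)
  have hgap := tendsto_norm_b_sub_a hAconv hBconv hPA hPB ha hb hg hgmin
  have hE : Tendsto (fun n => b (n + 1) - a (n + 1)) atTop (𝓝 g) :=
    tendsto_of_tendsto_norm_of_forall_norm_le hK hg hgmin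
      (fun n => hmem (ha n ▸ (hPA _).1) (hb n ▸ (hPB _).1)) hgap
  have hD : Tendsto (fun n => b n - a (n + 1)) atTop (𝓝 g) := by
    refine (tendsto_add_atTop_iff_nat 1).1 (tendsto_of_tendsto_norm_of_forall_norm_le hK hg hgmin
      (fun n => hmem (ha (n + 1) ▸ (hPA _).1) (hb n ▸ (hPB _).1)) ?_)
    exact tendsto_of_tendsto_of_tendsto_of_le_of_le ((tendsto_add_atTop_iff_nat 1).2 hgap) hgap
      (norm_b_succ_sub_a_le hPB hb) (norm_b_sub_a_succ_le hPA ha)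
  have hstep : Tendsto (fun n => T (b n) - b n) atTop (𝓝 0) := by
    have hTb : ∀ n, T (b n) = b (n + 1) := fun n => by rw [hT, Function.comp_apply, ← ha, ← hb]
    simpa [hTb] using hE.sub hD
  have hTcont : Continuous T :=
    hT ▸ ((hPB.lipschitzWith_one hBconv).comp (hPA.lipschitzWith_one hAconv)).continuous
  have hbn := tendsto_norm_atTop_of_tendsto_sub_nhds_zero hTcont hfix hstep
  refine ⟨(tendsto_add_atTop_iff_nat 1).1 ?_, hbn, hE, by simpa using hD.neg⟩
  refine tendsto_atTop_mono (fun n => ?_) (hbn.atTop_add hD.norm.neg)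
  simpa using norm_sub_norm_le (b n) (b n - a (n + 1))

/-- For fixed-point free `T = P_B ∘ P_A` and the alternating
projection sequences `b₀ = x`, `a_{n+1} = P_A b_n`, `b_{n+1} = P_B a_{n+1}`, one has
`‖a_n‖ → ∞`, `‖b_n‖ → ∞`, `b_n − a_n → g` (for `n ≥ 1`) and `a_{n+1} − b_n → −g`,
where `g` is the minimal-norm element of `closure (B − A)`. -/
theorem stmt8 (A B : Set X) (hAne : A.Nonempty) (hAcl : IsClosed A) (hAconv : Convex ℝ A)
    (hBne : B.Nonempty) (hBcl : IsClosed B) (hBconv : Convex ℝ B)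
    (PA PB : X → X) (hPA : IsProjector A PA) (hPB : IsProjector B PB)
    (T : X → X) (hT : T = PB ∘ PA) (hfix : ∀ x : X, T x ≠ x)
    (x : X) (a b : ℕ → X) (hb0 : b 0 = x)
    (ha : ∀ n : ℕ, a (n + 1) = PA (b n))
    (hb : ∀ n : ℕ, b (n + 1) = PB (a (n + 1)))
    (g : X) (hg : g ∈ closure (B - A))
    (hgmin : ∀ y ∈ closure (B - A), ‖g‖ ≤ ‖y‖) :
    Tendsto (fun n : ℕ => ‖a n‖) atTop atTop ∧
    Tendsto (fun n : ℕ => ‖b n‖) atTop atTop ∧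
    Tendsto (fun n : ℕ => b (n + 1) - a (n + 1)) atTop (nhds g) ∧
    Tendsto (fun n : ℕ => a (n + 1) - b n) atTop (nhds (-g)) :=
  stmt8_general A B hAconv hBconv PA PB hPA hPB T hT hfix x a b ha hb g hg hgmin
end

section
/- Let A and B be nonempty closed convex subsets of X, fix x ∈ X, and define b₀ := x, a_{n+1} := P_A(b_n), b_{n+1} := P_B(a_{n+1}) for all n ∈ ℕ. Then for every n ∈ ℕ, the increment b_{n+1} − b_n belongs to ((rec A) ∩ (rec B))^⊕. -/
open Filter Topology

variable {X : Type*} [NormedAddCommGroup X] [InnerProductSpace ℝ X] [FiniteDimensional ℝ X]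

/-- `S^⊕ = −(S^⊖) = {x : ⟪x, s⟫ ≥ 0 for all s ∈ S}`. -/
def plusCone (S : Set X) : Set X := {x : X | ∀ s ∈ S, (0 : ℝ) ≤ inner ℝ x s}

/-!
By the variational inequality of the projector onto a convex set `C`,
`⟪x - P_C x, y - P_C x⟫ ≤ 0` for all `y ∈ C`; taking `y = P_C x + d` with `d ∈ rec C` shows that
every projection step `P_C x - x` lies in `(rec C)^⊕`. The increment `b_{n+1} - b_n` is the sum
of the two steps `P_B a_{n+1} - a_{n+1}` and `P_A b_n - b_n`, and both lie in the convex cone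
`(rec A ∩ rec B)^⊕`.
-/

theorem plusCone_anti {S T : Set X} (h : S ⊆ T) : plusCone T ⊆ plusCone S :=
  fun _ hu s hs => hu s (h hs)

theorem add_mem_plusCone {S : Set X} {u v : X} (hu : u ∈ plusCone S) (hv : v ∈ plusCone S) :
    u + v ∈ plusCone S := fun s hs => by
  rw [inner_add_left]
  exact add_nonneg (hu s hs) (hv s hs)

theorem IsProjector.real_inner_le_zero {C : Set X} {P : X → X} (hC : Convex ℝ C)
    (hP : IsProjector C P) (x : X) {y : X} (hy : y ∈ C) :
    inner ℝ (x - P x) (y - P x) ≤ 0 := by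
  obtain ⟨hPx, hmin⟩ := hP x
  have : Nonempty C := ⟨⟨P x, hPx⟩⟩
  have hbdd : BddBelow (Set.range fun w : C => ‖x - w‖) :=
    ⟨0, Set.forall_mem_range.2 fun _ => norm_nonneg _⟩
  have hinf : ‖x - P x‖ = ⨅ w : C, ‖x - w‖ :=
    le_antisymm (le_ciInf fun w => hmin w w.2) (ciInf_le hbdd ⟨P x, hPx⟩)
  exact (norm_eq_iInf_iff_real_inner_le_zero hC hPx).1 hinf y hy

theorem IsProjector.sub_mem_plusCone_recCone {C : Set X} {P : X → X} (hC : Convex ℝ C)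
    (hP : IsProjector C P) (x : X) : P x - x ∈ plusCone (recCone C) := fun d hd => by
  have h := hP.real_inner_le_zero hC x (hd (P x) (hP x).1)
  rw [add_sub_cancel_right] at h
  rw [← neg_sub, inner_neg_left]
  exact neg_nonneg.2 h

theorem stmt9_general (A B : Set X) (hAconv : Convex ℝ A)
    (hBconv : Convex ℝ B)
    (PA PB : X → X) (hPA : IsProjector A PA) (hPB : IsProjector B PB)
    (a b : ℕ → X)
    (ha : ∀ n : ℕ, a (n + 1) = PA (b n))
    (hb : ∀ n : ℕ, b (n + 1) = PB (a (n + 1))) :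
    ∀ n : ℕ, b (n + 1) - b n ∈ plusCone (recCone A ∩ recCone B) := by
  intro n
  have hsplit : b (n + 1) - b n = (PB (a (n + 1)) - a (n + 1)) + (PA (b n) - b n) := by
    rw [← hb, ← ha]
    abel
  rw [hsplit]
  exact add_mem_plusCone
    (plusCone_anti Set.inter_subset_right (hPB.sub_mem_plusCone_recCone hBconv _))
    (plusCone_anti Set.inter_subset_left (hPA.sub_mem_plusCone_recCone hAconv _))

/-- For the alternating projection sequences `b₀ = x`,
`a_{n+1} = P_A b_n`, `b_{n+1} = P_B a_{n+1}`, every increment `b_{n+1} − b_n`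
lies in `((rec A) ∩ (rec B))^⊕`. -/
theorem stmt9 (A B : Set X) (hAne : A.Nonempty) (hAcl : IsClosed A) (hAconv : Convex ℝ A)
    (hBne : B.Nonempty) (hBcl : IsClosed B) (hBconv : Convex ℝ B)
    (PA PB : X → X) (hPA : IsProjector A PA) (hPB : IsProjector B PB)
    (x : X) (a b : ℕ → X) (hb0 : b 0 = x)
    (ha : ∀ n : ℕ, a (n + 1) = PA (b n))
    (hb : ∀ n : ℕ, b (n + 1) = PB (a (n + 1))) :
    ∀ n : ℕ, b (n + 1) - b n ∈ plusCone (recCone A ∩ recCone B) :=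
  stmt9_general A B hAconv hBconv PA PB hPA hPB a b ha hb
end

section
/- Let A and B be nonempty closed convex subsets of X, set T := P_B ∘ P_A, and suppose T has no fixed point. Suppose that (rec A) ∩ (rec B) is a ray. Then for every x ∈ X the sequence (Tⁿx/‖Tⁿx‖) (eventually well defined) converges. -/
open Filter Topology

variable {X : Type*} [NormedAddCommGroup X] [InnerProductSpace ℝ X] [FiniteDimensional ℝ X]

/-- A ray: the set of nonnegative multiples of some nonzero direction `d`. -/
def IsRay (S : Set X) : Prop := ∃ d : X, d ≠ 0 ∧ S = {y : X | ∃ t : ℝ, 0 ≤ t ∧ y = t • d}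

/-!
The iterates `Tⁿx` (`n ≥ 1`) lie in `B`, and along the orbit the gaps `‖Tⁿx - P_A Tⁿx‖` are
nonincreasing, with `‖P_A Tⁿx - Tⁿ⁺¹x‖` squeezed in between. A cluster point `z` of the orbit
would therefore satisfy `‖P_A z - z‖ ≤ ‖P_A z - P_B P_A z‖` with `z ∈ B`, so by uniqueness of the
nearest point `T z = z`. Hence `‖Tⁿx‖ → ∞`. A cluster point of `Tⁿx/‖Tⁿx‖` is then a unit
asymptotic direction of `B` (along the orbit) and of `A` (along `P_A Tⁿx`, at bounded distance),
that is, a unit vector of `rec A ∩ rec B`. A ray contains only one unit vector, so by compactness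
of the unit sphere the normalized iterates converge.
-/

open Function NormedSpace
open scoped RealInnerProductSpace

section Projector

variable {E : Type*} [NormedAddCommGroup E] [InnerProductSpace ℝ E] {C : Set E} {P : E → E}

theorem IsProjector.inner_sub_le_zero (hC : Convex ℝ C) (hP : IsProjector C P) (x : E) {y : E}
    (hy : y ∈ C) : ⟪x - P x, y - P x⟫ ≤ 0 := by
  have : Nonempty C := ⟨⟨y, hy⟩⟩
  refine (norm_eq_iInf_iff_real_inner_le_zero hC (hP x).1).mp ?_ y hy
  exact le_antisymm (le_ciInf fun w => (hP x).2 w w.2)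
    (ciInf_le ⟨0, by rintro r ⟨w, rfl⟩; positivity⟩ (⟨P x, (hP x).1⟩ : C))

theorem IsProjector.eq_of_norm_sub_le (hC : Convex ℝ C) (hP : IsProjector C P) {x y : E}
    (hy : y ∈ C) (h : ‖x - y‖ ≤ ‖x - P x‖) : P x = y := by
  have hinner := hP.inner_sub_le_zero hC x hy
  have hexpand : ‖x - y‖ ^ 2 = ‖x - P x‖ ^ 2 - 2 * ⟪x - P x, y - P x⟫ + ‖y - P x‖ ^ 2 := by
    rw [show x - y = (x - P x) - (y - P x) by abel]
    exact norm_sub_sq_real _ _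
  have hsq : ‖x - y‖ ^ 2 ≤ ‖x - P x‖ ^ 2 := pow_le_pow_left₀ (norm_nonneg _) h 2
  have : ‖y - P x‖ = 0 := by nlinarith [norm_nonneg (y - P x)]
  exact (sub_eq_zero.mp (norm_eq_zero.mp this)).symm

theorem IsProjector.lipschitzWith_one_s13 (hC : Convex ℝ C) (hP : IsProjector C P) :
    LipschitzWith 1 P := by
  refine LipschitzWith.of_dist_le_mul fun x y => ?_
  rw [NNReal.coe_one, one_mul, dist_eq_norm, dist_eq_norm]
  have hx : 0 ≤ ⟪x - P x, P x - P y⟫ := by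
    have := hP.inner_sub_le_zero hC x (hP y).1
    rw [show P y - P x = -(P x - P y) by abel, inner_neg_right] at this
    linarith
  have hy := hP.inner_sub_le_zero hC y (hP x).1
  have hfirm : ‖P x - P y‖ ^ 2 ≤ ⟪x - y, P x - P y⟫ := by
    rw [show x - y = (P x - P y) + ((x - P x) - (y - P y)) by abel, inner_add_left,
      real_inner_self_eq_norm_sq, inner_sub_left]
    linarith
  nlinarith [real_inner_le_norm (x - y) (P x - P y), norm_nonneg (P x - P y),
    norm_nonneg (x - y)]

end Projector

section RecessionCone

variable {E : Type*} [NormedAddCommGroup E] [NormedSpace ℝ E]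

theorem mem_recCone_of_tendsto_smul {S : Set E} (hScl : IsClosed S) (hSconv : Convex ℝ S)
    {ι : Type*} {l : Filter ι} [l.NeBot] {t : ι → ℝ} {s : ι → E} {w : E}
    (ht₀ : ∀ᶠ i in l, 0 ≤ t i) (ht : Tendsto t l (𝓝 0)) (hs : ∀ᶠ i in l, s i ∈ S)
    (hw : Tendsto (fun i => t i • s i) l (𝓝 w)) : w ∈ recCone S := by
  intro s₀ hs₀
  have hlim : Tendsto (fun i => (1 - t i) • s₀ + t i • s i) l (𝓝 (w + s₀)) := by
    have h := (((tendsto_const_nhds (x := (1 : ℝ))).sub ht).smul_const s₀).add hw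
    rwa [sub_zero, one_smul, add_comm s₀] at h
  refine hScl.mem_of_tendsto hlim ?_
  filter_upwards [ht₀, ht.eventually_le_const zero_lt_one, hs] with i h₀ h₁ hi
  exact hSconv hs₀ hi (by linarith) h₀ (by ring)

theorem eq_normalize_of_norm_eq_one_of_eq_nonneg_smul {d w : E} (hw : ‖w‖ = 1)
    (hwd : ∃ t : ℝ, 0 ≤ t ∧ w = t • d) : w = normalize d := by
  obtain ⟨t, ht, rfl⟩ := hwd
  have ht' : 0 < t := ht.lt_of_ne (by rintro rfl; simp at hw)
  rw [← normalize_eq_self_of_norm_eq_one hw, normalize_smul_of_pos ht']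

end RecessionCone

section AlternatingProjections

variable {E : Type*} [NormedAddCommGroup E] {A B : Set E} {PA PB : E → E}

theorem iterate_comp_mem (hPB : IsProjector B PB) {y : E} (hy : y ∈ B) :
    ∀ n, (PB ∘ PA)^[n] y ∈ B
  | 0 => hy
  | n + 1 => by rw [iterate_succ_apply']; exact (hPB _).1

theorem norm_comp_sub_projector_le (hPA : IsProjector A PA) (y : E) :
    ‖PB (PA y) - PA (PB (PA y))‖ ≤ ‖PA y - PB (PA y)‖ := by
  rw [norm_sub_rev (PA y)]
  exact (hPA _).2 _ (hPA y).1

theorem norm_projector_sub_comp_le (hPB : IsProjector B PB) {y : E} (hy : y ∈ B) :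
    ‖PA y - PB (PA y)‖ ≤ ‖y - PA y‖ := by
  rw [norm_sub_rev y]
  exact (hPB _).2 y hy

theorem antitone_norm_iterate_sub_projector (hPA : IsProjector A PA) (hPB : IsProjector B PB)
    {y : E} (hy : y ∈ B) :
    Antitone fun n => ‖(PB ∘ PA)^[n] y - PA ((PB ∘ PA)^[n] y)‖ := by
  refine antitone_nat_of_succ_le fun n => ?_
  rw [iterate_succ_apply']
  exact (norm_comp_sub_projector_le hPA _).trans
    (norm_projector_sub_comp_le hPB (iterate_comp_mem hPB hy n))

variable [InnerProductSpace ℝ E] (hAconv : Convex ℝ A) (hPA : IsProjector A PA)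
  (hBcl : IsClosed B) (hBconv : Convex ℝ B) (hPB : IsProjector B PB)
include hAconv hPA hBcl hBconv hPB

theorem isFixedPt_of_mapClusterPt_iterate {y z : E} (hy : y ∈ B)
    (hz : MapClusterPt z atTop fun n => (PB ∘ PA)^[n] y) : IsFixedPt (PB ∘ PA) z := by
  set u : ℕ → E := fun n => (PB ∘ PA)^[n] y
  have hPAc := (hPA.lipschitzWith_one_s13 hAconv).continuous
  have hPBc := (hPB.lipschitzWith_one_s13 hBconv).continuous
  have hanti := antitone_norm_iterate_sub_projector hPA hPB hy
  set δ := ⨅ n, ‖u n - PA (u n)‖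
  have hbdd : BddBelow (Set.range fun n => ‖u n - PA (u n)‖) :=
    ⟨0, by rintro r ⟨n, rfl⟩; positivity⟩
  have hδ : Tendsto (fun n => ‖u n - PA (u n)‖) atTop (𝓝 δ) := tendsto_atTop_ciInf hanti hbdd
  obtain ⟨U, hU, hUz⟩ := mapClusterPt_iff_ultrafilter.mp hz
  have hzB : z ∈ B := hBcl.mem_of_tendsto hUz (.of_forall (iterate_comp_mem hPB hy))
  have hgap : ‖z - PA z‖ = δ :=
    tendsto_nhds_unique (((continuous_id.sub hPAc).norm.tendsto z).comp hUz) (hδ.mono_left hU)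
  have hnext : δ ≤ ‖PA z - PB (PA z)‖ := by
    refine ge_of_tendsto (((hPAc.sub (hPBc.comp hPAc)).norm.tendsto z).comp hUz) (.of_forall ?_)
    intro n
    calc δ ≤ ‖u (n + 1) - PA (u (n + 1))‖ := ciInf_le hbdd (n + 1)
      _ ≤ ‖PA (u n) - PB (PA (u n))‖ := by
        simp only [u, iterate_succ_apply']
        exact norm_comp_sub_projector_le hPA _
  exact hPB.eq_of_norm_sub_le hBconv hzB (by rw [norm_sub_rev]; linarith)

theorem tendsto_norm_iterate_atTop [ProperSpace E] (hfix : ∀ z, (PB ∘ PA) z ≠ z) {y : E}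
    (hy : y ∈ B) : Tendsto (fun n => ‖(PB ∘ PA)^[n] y‖) atTop atTop := by
  by_contra h
  simp only [tendsto_atTop, not_forall, not_eventually, not_le] at h
  obtain ⟨M, hM⟩ := h
  obtain ⟨z, -, hz⟩ := (isCompact_closedBall (0 : E) M).exists_mapClusterPt_of_frequently
    (hM.mono fun n hn => mem_closedBall_zero_iff.mpr hn.le)
  exact hfix z (isFixedPt_of_mapClusterPt_iterate hAconv hPA hBcl hBconv hPB hy hz)

theorem mem_recCone_inter_of_mapClusterPt_normalize_iterate [ProperSpace E] (hAcl : IsClosed A)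
    (hfix : ∀ z, (PB ∘ PA) z ≠ z) {y w : E} (hy : y ∈ B)
    (hw : MapClusterPt w atTop fun n => normalize ((PB ∘ PA)^[n] y)) :
    w ∈ recCone A ∩ recCone B := by
  set u : ℕ → E := fun n => (PB ∘ PA)^[n] y
  obtain ⟨U, hU, hUw⟩ := mapClusterPt_iff_ultrafilter.mp hw
  have hinv : Tendsto (fun n => ‖u n‖⁻¹) U (𝓝 0) :=
    ((tendsto_norm_iterate_atTop hAconv hPA hBcl hBconv hPB hfix hy).mono_left hU).inv_tendsto_atTop
  have hinv₀ : ∀ᶠ n in U, 0 ≤ ‖u n‖⁻¹ := .of_forall fun n => by positivity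
  have hgap : Tendsto (fun n => ‖u n‖⁻¹ • (PA (u n) - u n)) U (𝓝 0) := by
    refine squeeze_zero_norm (fun n => ?_) (by simpa using hinv.mul_const ‖y - PA y‖)
    rw [norm_smul, norm_inv, norm_norm, norm_sub_rev]
    gcongr
    exact antitone_norm_iterate_sub_projector hPA hPB hy (Nat.zero_le n)
  refine ⟨mem_recCone_of_tendsto_smul hAcl hAconv hinv₀ hinv (.of_forall fun n => (hPA (u n)).1) ?_,
    mem_recCone_of_tendsto_smul hBcl hBconv hinv₀ hinv (.of_forall (iterate_comp_mem hPB hy)) hUw⟩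
  refine (add_zero w ▸ hUw.add hgap).congr fun n => ?_
  simp only [NormedSpace.normalize, smul_sub]
  abel

theorem tendsto_normalize_iterate [ProperSpace E] (hAcl : IsClosed A)
    (hfix : ∀ z, (PB ∘ PA) z ≠ z) {d : E}
    (hray : recCone A ∩ recCone B = {v : E | ∃ t : ℝ, 0 ≤ t ∧ v = t • d}) {y : E} (hy : y ∈ B) :
    Tendsto (fun n => normalize ((PB ∘ PA)^[n] y)) atTop (𝓝 (normalize d)) := by
  refine (isCompact_sphere (0 : E) 1).tendsto_nhds_of_unique_mapClusterPt ?_ fun w hw hcl => ?_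
  · have hnorm := tendsto_norm_iterate_atTop hAconv hPA hBcl hBconv hPB hfix hy
    filter_upwards [hnorm.eventually_gt_atTop 0] with n hn
    exact mem_sphere_zero_iff_norm.mpr (norm_normalize (norm_pos_iff.mp hn))
  · refine eq_normalize_of_norm_eq_one_of_eq_nonneg_smul (mem_sphere_zero_iff_norm.mp hw) ?_
    have hw' := mem_recCone_inter_of_mapClusterPt_normalize_iterate hAconv hPA hBcl hBconv hPB
      hAcl hfix hy hcl
    rwa [hray] at hw'

end AlternatingProjections

theorem stmt13_general (A B : Set X) (hAcl : IsClosed A) (hAconv : Convex ℝ A)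
    (hBcl : IsClosed B) (hBconv : Convex ℝ B)
    (PA PB : X → X) (hPA : IsProjector A PA) (hPB : IsProjector B PB)
    (T : X → X) (hT : T = PB ∘ PA) (hfix : ∀ x : X, T x ≠ x)
    (hray : IsRay (recCone A ∩ recCone B)) :
    ∀ x : X, ∃ q : X,
      Tendsto (fun n : ℕ => ‖T^[n] x‖⁻¹ • T^[n] x) atTop (nhds q) := by
  subst hT
  intro x
  obtain ⟨d, -, hd⟩ := hray
  refine ⟨normalize d, (tendsto_add_atTop_iff_nat 1).mp ?_⟩
  exact tendsto_normalize_iterate hAconv hPA hBcl hBconv hPB hAcl hfix hd (hPB (PA x)).1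

/-- For fixed-point free `T = P_B ∘ P_A`, if `(rec A) ∩ (rec B)` is
a ray then the normalized iterates `Tⁿx/‖Tⁿx‖` converge for every `x`. -/
theorem stmt13 (A B : Set X) (hAne : A.Nonempty) (hAcl : IsClosed A) (hAconv : Convex ℝ A)
    (hBne : B.Nonempty) (hBcl : IsClosed B) (hBconv : Convex ℝ B)
    (PA PB : X → X) (hPA : IsProjector A PA) (hPB : IsProjector B PB)
    (T : X → X) (hT : T = PB ∘ PA) (hfix : ∀ x : X, T x ≠ x)
    (hray : IsRay (recCone A ∩ recCone B)) :
    ∀ x : X, ∃ q : X,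
      Tendsto (fun n : ℕ => ‖T^[n] x‖⁻¹ • T^[n] x) atTop (nhds q) :=
  stmt13_general A B hAcl hAconv hBcl hBconv PA PB hPA hPB T hT hfix hray
end

section
/- Let T : X → X be firmly nonexpansive with no fixed point. Then (ran T)^∞ ∩ (ran(T − Id))^∞ = rec(closure(ran T)) ∩ rec(closure(ran(T − Id))), i.e. the intersection of the horizon cones of the ranges of T and of T − Id equals the intersection of the recession cones of the closures of these ranges. -/
open Filter Topology

variable {X : Type*} [NormedAddCommGroup X] [InnerProductSpace ℝ X] [FiniteDimensional ℝ X]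

/-- The horizon cone `S^∞` of a set `S`: all limits `λ_n • s_n → x` with `s_n ∈ S`,
`λ_n > 0` and `λ_n → 0`. -/
def horizonCone (S : Set X) : Set X :=
  {x : X | ∃ (s : ℕ → X) (l : ℕ → ℝ), (∀ n, s n ∈ S) ∧ (∀ n, 0 < l n) ∧
    Tendsto l atTop (nhds 0) ∧ Tendsto (fun n => l n • s n) atTop (nhds x)}

/-!
`Id - T` is again firmly nonexpansive, so for both ranges it suffices to know that a nonempty set
`S` whose closure is convex satisfies `S^∞ = rec (closure S)`, and that the closure of the range
of a firmly nonexpansive `T` is convex. For the latter, given `m = (1 - t) • T w₁ + t • T w₂` and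
`0 < l ≤ 1`, solve `l • x + (1 - l) • T x = m` by Banach's fixed point theorem; firm
nonexpansiveness bounds `‖T x - m‖²` by `l` times a constant independent of `l`, so
`m ∈ closure (ran T)`.
-/

open Set
open scoped RealInnerProductSpace

def FirmlyNonexpansive {E : Type*} [NormedAddCommGroup E] [InnerProductSpace ℝ E]
    (T : E → E) : Prop :=
  ∀ x y, ‖T x - T y‖ ^ 2 ≤ ⟪x - y, T x - T y⟫

section Closure

variable {E : Type*} [NormedAddCommGroup E]

theorem mem_closure_of_forall_norm_sub_sq_le {S : Set E} {m : E} {C : ℝ}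
    (h : ∀ l : ℝ, 0 < l → l ≤ 1 → ∃ p ∈ S, ‖p - m‖ ^ 2 ≤ l * C) : m ∈ closure S := by
  refine Metric.mem_closure_iff.2 fun ε hε => ?_
  set l := min 1 (ε ^ 2 / (|C| + 1))
  have hl : 0 < l := lt_min one_pos (by positivity)
  obtain ⟨p, hpS, hp⟩ := h l hl (min_le_left _ _)
  refine ⟨p, hpS, ?_⟩
  have hlC : l * (|C| + 1) ≤ ε ^ 2 :=
    (le_div_iff₀ (by positivity)).1 (min_le_right _ _)
  have : ‖m - p‖ ^ 2 < ε ^ 2 := by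
    rw [norm_sub_rev]
    nlinarith [le_abs_self C]
  rw [dist_eq_norm]
  exact lt_of_pow_lt_pow_left₀ 2 hε.le this

theorem convex_closure_of_forall_mem_closure [NormedSpace ℝ E] {S : Set E}
    (h : ∀ a ∈ S, ∀ b ∈ S, ∀ t : ℝ, 0 ≤ t → t ≤ 1 → (1 - t) • a + t • b ∈ closure S) :
    Convex ℝ (closure S) := by
  intro a ha b hb s t hs ht hst
  obtain rfl : s = 1 - t := by linarith
  rw [← closure_closure (s := S)]
  exact map_mem_closure₂ (f := fun a b => (1 - t) • a + t • b) (by fun_prop) ha hb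
    fun a' ha' b' hb' => h a' ha' b' hb' t ht (by linarith)

end Closure

namespace FirmlyNonexpansive

variable {E : Type*} [NormedAddCommGroup E] [InnerProductSpace ℝ E] {T : E → E}

theorem id_sub (hT : FirmlyNonexpansive T) : FirmlyNonexpansive fun x => x - T x := by
  intro x y
  have h := hT x y
  rw [show x - T x - (y - T y) = (x - y) - (T x - T y) by abel, norm_sub_sq_real,
    inner_sub_right (x - y) (x - y), real_inner_self_eq_norm_sq]
  linarith

theorem lipschitzWith_one (hT : FirmlyNonexpansive T) : LipschitzWith 1 T := by
  refine LipschitzWith.of_dist_le_mul fun x y => ?_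
  rw [NNReal.coe_one, one_mul, dist_eq_norm, dist_eq_norm]
  have h := (hT x y).trans (real_inner_le_norm _ _)
  rw [sq] at h
  rcases (norm_nonneg (T x - T y)).eq_or_lt with h0 | h0
  · rw [← h0]; exact norm_nonneg _
  · exact le_of_mul_le_mul_right (by linarith) h0

/-- Writing `T = Id - N` with `N` nonexpansive, the equation becomes `x = z + (1 - l) • N x`,
whose right-hand side is a contraction. -/
theorem exists_smul_add_smul_eq [CompleteSpace E] (hT : FirmlyNonexpansive T) {l : ℝ}
    (hl0 : 0 < l) (hl1 : l ≤ 1) (z : E) : ∃ x, l • x + (1 - l) • T x = z := by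
  set c : NNReal := ⟨1 - l, by linarith⟩
  have hN := hT.id_sub.lipschitzWith_one
  have hcontr : ContractingWith c fun x => z + (1 - l) • (x - T x) := by
    refine ⟨by rw [← NNReal.coe_lt_coe, NNReal.coe_one]; exact sub_lt_self 1 hl0,
      LipschitzWith.of_dist_le_mul fun x y => ?_⟩
    rw [dist_add_left, dist_smul₀, Real.norm_of_nonneg (by linarith)]
    exact mul_le_mul_of_nonneg_left (by simpa using hN.dist_le_mul x y) (by linarith)
  obtain ⟨x, hx, -⟩ := hcontr.exists_fixedPoint 0 (edist_ne_top _ _)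
  refine ⟨x, ?_⟩
  rw [eq_sub_of_add_eq (hx : z + (1 - l) • (x - T x) = x)]
  module

section Approximation

variable {l : ℝ} {x m : E}

theorem inner_sub_le_of_smul_add_smul_eq (hT : FirmlyNonexpansive T) (hl : 0 ≤ l)
    (hx : l • x + (1 - l) • T x = m) (w : E) :
    ⟪T x - m, T x - T w⟫ ≤ l * (‖w - T w‖ * ‖T x - T w‖) := by
  have hm : T x - m = -(l • (x - T x)) := by rw [← hx]; module
  have hfirm := hT x w
  have hsplit : x - T x = (x - w) - (T x - T w) + (w - T w) := by abel
  have hCS := neg_le_of_abs_le (abs_real_inner_le_norm (w - T w) (T x - T w))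
  calc ⟪T x - m, T x - T w⟫
      = -l * (⟪x - w, T x - T w⟫ - ‖T x - T w‖ ^ 2 + ⟪w - T w, T x - T w⟫) := by
        rw [hm, inner_neg_left, real_inner_smul_left, hsplit, inner_add_left, inner_sub_left,
          real_inner_self_eq_norm_sq]
        ring
    _ ≤ l * (‖w - T w‖ * ‖T x - T w‖) := by nlinarith

theorem norm_sub_le_of_smul_add_smul_eq (hT : FirmlyNonexpansive T) (hl0 : 0 ≤ l) (hl1 : l ≤ 1)
    (hx : l • x + (1 - l) • T x = m) (w : E) :
    ‖T x - T w‖ ≤ ‖m - T w‖ + ‖w - T w‖ := by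
  have h := hT.inner_sub_le_of_smul_add_smul_eq hl0 hx w
  have hCS := real_inner_le_norm (m - T w) (T x - T w)
  rw [show T x - m = (T x - T w) - (m - T w) by abel, inner_sub_left,
    real_inner_self_eq_norm_sq] at h
  have hd : ‖T x - T w‖ * ‖T x - T w‖ ≤ (‖m - T w‖ + ‖w - T w‖) * ‖T x - T w‖ := by
    have hl : l * (‖w - T w‖ * ‖T x - T w‖) ≤ ‖w - T w‖ * ‖T x - T w‖ :=
      mul_le_of_le_one_left (by positivity) hl1
    rw [sq] at h
    linarith
  rcases (norm_nonneg (T x - T w)).eq_or_lt with h0 | h0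
  · rw [← h0]; positivity
  · exact le_of_mul_le_mul_right hd h0

theorem norm_sub_sq_le_of_smul_add_smul_eq (hT : FirmlyNonexpansive T) (hl0 : 0 ≤ l)
    (hl1 : l ≤ 1) (hx : l • x + (1 - l) • T x = m) {t : ℝ} (ht0 : 0 ≤ t) (ht1 : t ≤ 1) {w₁ w₂ : E}
    (hm : (1 - t) • T w₁ + t • T w₂ = m) :
    ‖T x - m‖ ^ 2 ≤ l * (‖w₁ - T w₁‖ * (‖m - T w₁‖ + ‖w₁ - T w₁‖)
      + ‖w₂ - T w₂‖ * (‖m - T w₂‖ + ‖w₂ - T w₂‖)) := by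
  have hsplit : T x - m = (1 - t) • (T x - T w₁) + t • (T x - T w₂) := by rw [← hm]; module
  have bound : ∀ w, ⟪T x - m, T x - T w⟫ ≤ l * (‖w - T w‖ * (‖m - T w‖ + ‖w - T w‖)) :=
    fun w => (hT.inner_sub_le_of_smul_add_smul_eq hl0 hx w).trans <| by
      gcongr; exact hT.norm_sub_le_of_smul_add_smul_eq hl0 hl1 hx w
  have hB₁ : 0 ≤ l * (‖w₁ - T w₁‖ * (‖m - T w₁‖ + ‖w₁ - T w₁‖)) := by positivity
  have hB₂ : 0 ≤ l * (‖w₂ - T w₂‖ * (‖m - T w₂‖ + ‖w₂ - T w₂‖)) := by positivity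
  calc ‖T x - m‖ ^ 2
      = (1 - t) * ⟪T x - m, T x - T w₁⟫ + t * ⟪T x - m, T x - T w₂⟫ := by
        rw [← real_inner_self_eq_norm_sq]
        nth_rewrite 2 [hsplit]
        rw [inner_add_right, real_inner_smul_right, real_inner_smul_right]
    _ ≤ (1 - t) * (l * (‖w₁ - T w₁‖ * (‖m - T w₁‖ + ‖w₁ - T w₁‖)))
        + t * (l * (‖w₂ - T w₂‖ * (‖m - T w₂‖ + ‖w₂ - T w₂‖))) := by
        gcongr
        · exact bound w₁
        · exact bound w₂
    _ ≤ _ := by nlinarith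

end Approximation

theorem convex_closure_range [CompleteSpace E] (hT : FirmlyNonexpansive T) :
    Convex ℝ (closure (range T)) := by
  refine convex_closure_of_forall_mem_closure ?_
  rintro _ ⟨w₁, rfl⟩ _ ⟨w₂, rfl⟩ t ht0 ht1
  exact mem_closure_of_forall_norm_sub_sq_le fun l hl0 hl1 =>
    (hT.exists_smul_add_smul_eq hl0 hl1 _).elim fun x hx =>
      ⟨T x, mem_range_self x, hT.norm_sub_sq_le_of_smul_add_smul_eq hl0.le hl1 hx ht0 ht1 rfl⟩

theorem convex_closure_range_sub_id [CompleteSpace E] (hT : FirmlyNonexpansive T) :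
    Convex ℝ (closure (range fun x => T x - x)) := by
  have hneg : (range fun x => T x - x) = -range fun x => x - T x := by
    rw [← image_neg_eq_neg, ← range_comp]
    exact congrArg range (funext fun x => (neg_sub x (T x)).symm)
  rw [hneg, ← neg_closure]
  exact hT.id_sub.convex_closure_range.neg

end FirmlyNonexpansive

section Cones

variable {V : Type*} [NormedAddCommGroup V]

theorem horizonCone_subset_recCone_closure [InnerProductSpace ℝ V] {S : Set V}
    (hS : Convex ℝ (closure S)) :
    horizonCone S ⊆ recCone (closure S) := by
  rintro x ⟨s, l, hs, hl0, hl, hx⟩ c hc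
  have hmem : ∀ᶠ n in atTop, l n • s n + (1 - l n) • c ∈ closure S := by
    filter_upwards [hl.eventually_lt_const one_pos] with n hn
    exact hS (subset_closure (hs n)) hc (hl0 n).le (by linarith) (by ring)
  have hlim : Tendsto (fun n => l n • s n + (1 - l n) • c) atTop (𝓝 (x + c)) := by
    simpa using hx.add (((tendsto_const_nhds (x := (1 : ℝ))).sub hl).smul_const c)
  exact isClosed_closure.mem_of_tendsto hlim hmem

theorem nsmul_add_mem_of_mem_recCone {C : Set V} {x c : V} (hx : x ∈ recCone C) (hc : c ∈ C)
    (n : ℕ) : n • x + c ∈ C := by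
  induction n with
  | zero => simpa using hc
  | succ n ih => simpa [succ_nsmul', add_assoc] using hx _ ih

/-- Approximate `(n + 1) • x + s₀ ∈ closure S` by `s n ∈ S` and rescale by `1 / (n + 1)`. -/
theorem recCone_closure_subset_horizonCone [InnerProductSpace ℝ V] {S : Set V}
    (hS : S.Nonempty) :
    recCone (closure S) ⊆ horizonCone S := by
  intro x hx
  obtain ⟨s₀, hs₀⟩ := hS
  choose s hsS hsd using fun n : ℕ => Metric.mem_closure_iff.1
    (nsmul_add_mem_of_mem_recCone hx (subset_closure hs₀) (n + 1)) 1 one_pos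
  have hl := tendsto_one_div_add_atTop_nhds_zero_nat (𝕜 := ℝ)
  refine ⟨s, fun n => 1 / ((n : ℝ) + 1), hsS, fun n => by positivity, hl, ?_⟩
  rw [tendsto_iff_norm_sub_tendsto_zero]
  refine squeeze_zero (g := fun n : ℕ => 1 / ((n : ℝ) + 1) * (1 + ‖s₀‖))
    (fun n => norm_nonneg _) (fun n => ?_) (by simpa using hl.mul_const (1 + ‖s₀‖))
  have hn : ((n : ℝ) + 1) ≠ 0 := by positivity
  have hsplit : (1 / ((n : ℝ) + 1)) • s n - x
      = (1 / ((n : ℝ) + 1)) • (s n - ((n + 1) • x + s₀) + s₀) := by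
    rw [smul_add, smul_sub, smul_add, ← Nat.cast_smul_eq_nsmul ℝ, smul_smul, Nat.cast_add_one,
      one_div_mul_cancel hn, one_smul]
    abel
  rw [hsplit, norm_smul, Real.norm_of_nonneg (by positivity)]
  refine mul_le_mul_of_nonneg_left ?_ (by positivity)
  calc ‖s n - ((n + 1) • x + s₀) + s₀‖
      ≤ ‖s n - ((n + 1) • x + s₀)‖ + ‖s₀‖ := norm_add_le _ _
    _ ≤ 1 + ‖s₀‖ := by
      gcongr
      rw [← dist_eq_norm, dist_comm]
      exact (hsd n).le

theorem horizonCone_eq_recCone_closure [InnerProductSpace ℝ V] {S : Set V}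
    (hconv : Convex ℝ (closure S)) (hne : S.Nonempty) :
    horizonCone S = recCone (closure S) :=
  (horizonCone_subset_recCone_closure hconv).antisymm (recCone_closure_subset_horizonCone hne)

end Cones

theorem stmt16_general (T : X → X)
    (hT : ∀ x y : X, ‖T x - T y‖ ^ 2 ≤ (inner ℝ (x - y) (T x - T y) : ℝ)) :
    horizonCone (Set.range T) ∩ horizonCone (Set.range fun z : X => T z - z)
      = recCone (closure (Set.range T)) ∩
        recCone (closure (Set.range fun z : X => T z - z)) := by
  have hT' : FirmlyNonexpansive T := hT
  rw [horizonCone_eq_recCone_closure hT'.convex_closure_range (range_nonempty T),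
    horizonCone_eq_recCone_closure hT'.convex_closure_range_sub_id (range_nonempty _)]

/-- If `T` is firmly nonexpansive and fixed-point free, then
`(ran T)^∞ ∩ (ran (T − Id))^∞ = rec (closure (ran T)) ∩ rec (closure (ran (T − Id)))`. -/
theorem stmt16 (T : X → X)
    (hT : ∀ x y : X, ‖T x - T y‖ ^ 2 ≤ (inner ℝ (x - y) (T x - T y) : ℝ))
    (hfix : ∀ x : X, T x ≠ x) :
    horizonCone (Set.range T) ∩ horizonCone (Set.range fun z : X => T z - z)
      = recCone (closure (Set.range T)) ∩
        recCone (closure (Set.range fun z : X => T z - z)) :=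
  stmt16_general T hT
end

section
/- Let f : ℝ → ℝ ∪ {+∞} be proper, convex and lower semicontinuous, let a ∈ X with ‖a‖ = 1, and define F : X → ℝ ∪ {+∞} by F(x) := f(⟪a, x⟫). Let T := prox_F and let P_{a^⊥} denote the orthogonal projection onto the orthogonal complement of the span of a. Then for every x ∈ X and every n ∈ ℕ, Tⁿx = P_{a^⊥}(x) + (prox_f)ⁿ(⟪a, x⟫) • a, where prox_f is the proximity operator of f on ℝ. -/
/-!
The prox objective `w ↦ F w + ‖y - w‖² / 2` is bounded below, via Cauchy–Schwarz
`|⟪a, y⟫ - ⟪a, w⟫| ≤ ‖y - w‖`, by the one-dimensional prox objective of `f` at `⟪a, w⟫`; the point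
`y - ⟪a, y⟫ • a + prox_f ⟪a, y⟫ • a` attains this bound, so it is a minimizer. Minimizers are
unique since a convex function plus `‖y - ·‖² / 2` is strictly convex (parallelogram law), so this
point is `T y`. As `T` only moves the component along `a`, the iterates follow by induction.
-/

open Filter Topology

variable {X : Type*} [NormedAddCommGroup X] [InnerProductSpace ℝ X] [FiniteDimensional ℝ X]

/-- `p` is the proximity operator of `g`: `p x` minimizes `y ↦ g y + ‖x − y‖²/2`. -/
def IsProxOp {Y : Type*} [NormedAddCommGroup Y] (g : Y → EReal) (p : Y → Y) : Prop :=
  ∀ x y : Y, g (p x) + ((‖x - p x‖ ^ 2 / 2 : ℝ) : EReal) ≤ g y + ((‖x - y‖ ^ 2 / 2 : ℝ) : EReal)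

open Set

section ProxObjective

variable {E : Type*} [NormedAddCommGroup E]

noncomputable def proxObj (g : E → EReal) (x y : E) : EReal :=
  g y + ((‖x - y‖ ^ 2 / 2 : ℝ) : EReal)

theorem isProxOp_iff_isMinOn {g : E → EReal} {p : E → E} :
    IsProxOp g p ↔ ∀ x, IsMinOn (proxObj g x) univ (p x) := by
  simp only [isMinOn_univ_iff, proxObj, IsProxOp]

theorem ne_top_of_isMinOn_proxObj {g : E → EReal} {x c z : E}
    (hc : IsMinOn (proxObj g x) univ c) (hz : g z ≠ ⊤) : g c ≠ ⊤ := by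
  intro htop
  have hle := isMinOn_univ_iff.1 hc z
  rw [proxObj, proxObj, htop, EReal.top_add_coe, top_le_iff] at hle
  exact EReal.add_ne_top hz (EReal.coe_ne_top _) hle

variable [InnerProductSpace ℝ E]

theorem eq_of_isMinOn_proxObj {g : E → EReal} (hproper : ∃ z, g z ≠ ⊤) (hbot : ∀ z, g z ≠ ⊥)
    (hmid : ∀ u v, g (midpoint ℝ u v) ≤ ((2⁻¹ : ℝ) : EReal) * g u + ((2⁻¹ : ℝ) : EReal) * g v)
    {x c₁ c₂ : E} (h₁ : IsMinOn (proxObj g x) univ c₁) (h₂ : IsMinOn (proxObj g x) univ c₂) :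
    c₁ = c₂ := by
  obtain ⟨z, hz⟩ := hproper
  set m := midpoint ℝ c₁ c₂
  have happ := EuclideanGeometry.dist_sq_add_dist_sq_eq_two_mul_dist_midpoint_sq_add_half_dist_sq
    x c₁ c₂
  simp only [dist_eq_norm] at happ
  have h₁₂ := isMinOn_univ_iff.1 h₁ c₂
  have h₂₁ := isMinOn_univ_iff.1 h₂ c₁
  have h₁m := (isMinOn_univ_iff.1 h₁ m).trans (add_le_add_left (hmid c₁ c₂) _)
  simp only [proxObj] at h₁₂ h₂₁ h₁m
  lift g c₁ to ℝ using ⟨ne_top_of_isMinOn_proxObj h₁ hz, hbot c₁⟩ with r₁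
  lift g c₂ to ℝ using ⟨ne_top_of_isMinOn_proxObj h₂ hz, hbot c₂⟩ with r₂
  norm_cast at h₁₂ h₂₁ h₁m
  have hsq : ‖c₁ - c₂‖ ^ 2 ≤ 0 := by nlinarith
  rwa [sq_nonpos_iff, norm_eq_zero, sub_eq_zero] at hsq

variable {a : E}

theorem inner_smul_self_of_norm_eq_one (ha : ‖a‖ = 1) (r : ℝ) : inner ℝ a (r • a) = r := by
  rw [real_inner_smul_right, real_inner_self_eq_norm_sq, ha, one_pow, mul_one]

theorem coe_orthogonalProjection_orthogonal_span_singleton (ha : ‖a‖ = 1) (x : E) :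
    (Submodule.orthogonalProjectionOnto (Submodule.span ℝ {a})ᗮ x : E) = x - inner ℝ a x • a := by
  simp [Submodule.starProjection_unit_singleton ℝ ha]

theorem isMinOn_proxObj_comp_inner {f : ℝ → EReal} {p : ℝ → ℝ} (hp : IsProxOp f p)
    (ha : ‖a‖ = 1) (y : E) :
    IsMinOn (proxObj (fun x => f (inner ℝ a x)) y) univ
      (y - inner ℝ a y • a + p (inner ℝ a y) • a) := by
  refine isMinOn_univ_iff.2 fun w => ?_
  set s := inner ℝ a y
  have hc : inner ℝ a (y - s • a + p s • a) = p s := by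
    simp only [inner_add_right, inner_sub_right, inner_smul_self_of_norm_eq_one ha, s]
    ring
  have hyc : ‖y - (y - s • a + p s • a)‖ = ‖s - p s‖ := by
    rw [show y - (y - s • a + p s • a) = (s - p s) • a by module, norm_smul, ha, mul_one]
  have hyw : ‖s - inner ℝ a w‖ ≤ ‖y - w‖ := by
    simpa [s, ← inner_sub_right, ha] using abs_real_inner_le_norm a (y - w)
  calc proxObj (fun x => f (inner ℝ a x)) y (y - s • a + p s • a)
      = f (p s) + ((‖s - p s‖ ^ 2 / 2 : ℝ) : EReal) := by rw [proxObj, hc, hyc]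
    _ ≤ f (inner ℝ a w) + ((‖s - inner ℝ a w‖ ^ 2 / 2 : ℝ) : EReal) := hp s _
    _ ≤ proxObj (fun x => f (inner ℝ a x)) y w := by
      rw [proxObj]
      gcongr

theorem IsProxOp.comp_inner_apply {f : ℝ → EReal} {p : ℝ → ℝ} {T : E → E}
    (hT : IsProxOp (fun x => f (inner ℝ a x)) T) (hproper : ∃ z, f z ≠ ⊤) (hbot : ∀ z, f z ≠ ⊥)
    (hconv : ∀ z w t : ℝ, 0 ≤ t → t ≤ 1 →
      f (t * z + (1 - t) * w) ≤ (t : EReal) * f z + ((1 - t : ℝ) : EReal) * f w)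
    (hp : IsProxOp f p) (ha : ‖a‖ = 1) (y : E) :
    T y = y - inner ℝ a y • a + p (inner ℝ a y) • a := by
  obtain ⟨z, hz⟩ := hproper
  have hmid (u v : E) : f (inner ℝ a (midpoint ℝ u v))
      ≤ ((2⁻¹ : ℝ) : EReal) * f (inner ℝ a u) + ((2⁻¹ : ℝ) : EReal) * f (inner ℝ a v) := by
    convert hconv (inner ℝ a u) (inner ℝ a v) 2⁻¹ (by norm_num) (by norm_num) using 3 <;>
      norm_num [midpoint_eq_smul_add, inner_add_right, real_inner_smul_right]
  refine eq_of_isMinOn_proxObj ⟨z • a, ?_⟩ (fun _ => hbot _) hmid (isProxOp_iff_isMinOn.1 hT y)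
    (isMinOn_proxObj_comp_inner hp ha y)
  rwa [inner_smul_self_of_norm_eq_one ha]

end ProxObjective

theorem stmt18_general (f : ℝ → EReal)
    (hproper : ∃ z : ℝ, f z ≠ ⊤) (hbot : ∀ z : ℝ, f z ≠ ⊥)
    (hconv : ∀ z w t : ℝ, 0 ≤ t → t ≤ 1 →
      f (t * z + (1 - t) * w) ≤ (t : EReal) * f z + ((1 - t : ℝ) : EReal) * f w)
    (a : X) (ha : ‖a‖ = 1)
    (F : X → EReal) (hF : ∀ x : X, F x = f (inner ℝ a x))
    (T : X → X) (hT : IsProxOp F T)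
    (p : ℝ → ℝ) (hp : IsProxOp f p) :
    ∀ (x : X) (n : ℕ),
      T^[n] x = (Submodule.orthogonalProjection (Submodule.span ℝ {a})ᗮ x : X)
        + p^[n] (inner ℝ a x) • a := by
  obtain rfl : F = fun x => f (inner ℝ a x) := funext hF
  intro x n
  rw [coe_orthogonalProjection_orthogonal_span_singleton ha]
  induction n with
  | zero => simp
  | succ n ih =>
    have hin :
        inner ℝ a (x - inner ℝ a x • a + p^[n] (inner ℝ a x) • a) = p^[n] (inner ℝ a x) := by
      simp only [inner_add_right, inner_sub_right, inner_smul_self_of_norm_eq_one ha]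
      ring
    rw [Function.iterate_succ_apply', Function.iterate_succ_apply', ih,
      hT.comp_inner_apply hproper hbot hconv hp ha, hin]
    module

/-- Let `f : ℝ → ℝ ∪ {+∞}` be proper, convex and lower
semicontinuous, `‖a‖ = 1`, and `F x = f ⟪a, x⟫`. Then the iterates of `T = prox_F`
satisfy `Tⁿ x = P_{a^⊥} x + (prox_f)ⁿ ⟪a, x⟫ • a`. -/
theorem stmt18 (f : ℝ → EReal)
    (hproper : ∃ z : ℝ, f z ≠ ⊤) (hbot : ∀ z : ℝ, f z ≠ ⊥)
    (hconv : ∀ z w t : ℝ, 0 ≤ t → t ≤ 1 →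
      f (t * z + (1 - t) * w) ≤ (t : EReal) * f z + ((1 - t : ℝ) : EReal) * f w)
    (hlsc : LowerSemicontinuous f)
    (a : X) (ha : ‖a‖ = 1)
    (F : X → EReal) (hF : ∀ x : X, F x = f (inner ℝ a x))
    (T : X → X) (hT : IsProxOp F T)
    (p : ℝ → ℝ) (hp : IsProxOp f p) :
    ∀ (x : X) (n : ℕ),
      T^[n] x = (Submodule.orthogonalProjection (Submodule.span ℝ {a})ᗮ x : X)
        + p^[n] (inner ℝ a x) • a :=
  stmt18_general f hproper hbot hconv a ha F hF T hT p hp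
end

section
/- Let f : ℝ → ℝ ∪ {+∞} be proper, convex and lower semicontinuous; suppose f is bounded below but has no minimizer. Let a ∈ X with ‖a‖ = 1, define F : X → ℝ ∪ {+∞} by F(x) := f(⟪a, x⟫), and let T := prox_F. Then for every x ∈ X the sequence (Tⁿx/‖Tⁿx‖) is eventually well defined and converges, with limit equal to a or to −a. -/
/-! Because `F` depends on `x` only through `⟪a, x⟫`, `prox_F` moves points only along `a`:
`T y = y + (p ⟪a, y⟫ - ⟪a, y⟫) • a` with `p = prox_f`. Hence `Tⁿ x = v + pⁿ s • a` with `v ⊥ a`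
fixed. Being the prox operator of a convex function, `p` is firmly nonexpansive, so monotone
and continuous, and it has no fixed point since a fixed point of `prox_f` minimizes `f`. A
monotone orbit of a continuous map of `ℝ` without fixed points cannot converge, so `pⁿ s → ±∞`
and `Tⁿ x / ‖Tⁿ x‖ → ±a`. -/

open Filter Topology

variable {X : Type*} [NormedAddCommGroup X] [InnerProductSpace ℝ X] [FiniteDimensional ℝ X]

def IsProxPoint {Y : Type*} [NormedAddCommGroup Y] (g : Y → EReal) (x y : Y) : Prop :=
  ∀ z : Y, g y + ((‖x - y‖ ^ 2 / 2 : ℝ) : EReal) ≤ g z + ((‖x - z‖ ^ 2 / 2 : ℝ) : EReal)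

lemma IsProxOp.isProxPoint {Y : Type*} [NormedAddCommGroup Y] {g : Y → EReal} {p : Y → Y}
    (hp : IsProxOp g p) (x : Y) : IsProxPoint g x (p x) :=
  hp x

namespace IsProxPoint

lemma ne_top {Y : Type*} [NormedAddCommGroup Y] {g : Y → EReal} {x y : Y}
    (hproper : ∃ z, g z ≠ ⊤) (hbot : ∀ z, g z ≠ ⊥) (h : IsProxPoint g x y) : g y ≠ ⊤ := by
  obtain ⟨z, hz⟩ := hproper
  lift g z to ℝ using ⟨hz, hbot z⟩ with c hc
  have hle := (le_add_of_nonneg_right (by positivity)).trans (h z)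
  rw [← hc, ← EReal.coe_add] at hle
  exact ne_top_of_le_ne_top (EReal.coe_ne_top _) hle

section InnerProductSpace

variable {E : Type*} [NormedAddCommGroup E] [InnerProductSpace ℝ E] {g : E → EReal} {x y : E}

lemma add_inner_le (hbot : ∀ z, g z ≠ ⊥)
    (hconv : ∀ z w : E, ∀ τ : ℝ, 0 ≤ τ → τ ≤ 1 →
      g (τ • z + (1 - τ) • w) ≤ (τ : EReal) * g z + ((1 - τ : ℝ) : EReal) * g w)
    (h : IsProxPoint g x y) (hy : g y ≠ ⊤) (z : E) :
    g y + (inner ℝ (x - y) (z - y) : EReal) ≤ g z := by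
  by_cases hz : g z = ⊤
  · simp [hz]
  lift g y to ℝ using ⟨hy, hbot y⟩ with r hr
  lift g z to ℝ using ⟨hz, hbot z⟩ with c hc
  rw [← EReal.coe_add, EReal.coe_le_coe_iff]
  by_contra! hlt
  set δ := r + inner ℝ (x - y) (z - y) - c
  set d := ‖z - y‖ ^ 2
  have hδ : 0 < δ := by linarith
  -- Testing the prox inequality at `y + τ • (z - y)` gives `δ ≤ τ * d / 2`, which this `τ`
  -- makes smaller than `δ`.
  set τ := δ / (δ + d)
  have hτ : τ * (δ + d) = δ := div_mul_cancel₀ _ (by positivity)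
  have hτ0 : 0 < τ := by positivity
  have hτ1 : τ ≤ 1 := (div_le_one (by positivity)).2 (by linarith [sq_nonneg ‖z - y‖])
  have hconv' : g (τ • z + (1 - τ) • y) ≤ ((τ * c + (1 - τ) * r : ℝ) : EReal) := by
    have := hconv z y τ hτ0.le hτ1
    rwa [← hr, ← hc, ← EReal.coe_mul, ← EReal.coe_mul, ← EReal.coe_add] at this
  have hprox := (h (τ • z + (1 - τ) • y)).trans (add_le_add_left hconv' _)
  rw [← hr, ← EReal.coe_add, ← EReal.coe_add, EReal.coe_le_coe_iff] at hprox
  have hdiff : x - (τ • z + (1 - τ) • y) = (x - y) - τ • (z - y) := by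
    simp only [smul_sub, sub_smul, one_smul]; abel
  rw [hdiff, norm_sub_sq_real (x - y), real_inner_smul_right, norm_smul, mul_pow, Real.norm_eq_abs,
    sq_abs] at hprox
  nlinarith

lemma norm_sub_sq_le_inner (hproper : ∃ z, g z ≠ ⊤) (hbot : ∀ z, g z ≠ ⊥)
    (hconv : ∀ z w : E, ∀ τ : ℝ, 0 ≤ τ → τ ≤ 1 →
      g (τ • z + (1 - τ) • w) ≤ (τ : EReal) * g z + ((1 - τ : ℝ) : EReal) * g w)
    {x' y' : E} (h : IsProxPoint g x y) (h' : IsProxPoint g x' y') :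
    ‖y - y'‖ ^ 2 ≤ inner ℝ (x - x') (y - y') := by
  have hy := h.add_inner_le hbot hconv (h.ne_top hproper hbot) y'
  have hy' := h'.add_inner_le hbot hconv (h'.ne_top hproper hbot) y
  lift g y to ℝ using ⟨h.ne_top hproper hbot, hbot y⟩ with r
  lift g y' to ℝ using ⟨h'.ne_top hproper hbot, hbot y'⟩ with r'
  rw [← EReal.coe_add, EReal.coe_le_coe_iff] at hy hy'
  have key : inner ℝ (x - x') (y - y') - ‖y - y'‖ ^ 2
      = -inner ℝ (x - y) (y' - y) - inner ℝ (x' - y') (y - y') := by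
    simp only [← real_inner_self_eq_norm_sq, inner_sub_left, inner_sub_right, real_inner_comm]
    ring
  linarith

lemma unique (hproper : ∃ z, g z ≠ ⊤) (hbot : ∀ z, g z ≠ ⊥)
    (hconv : ∀ z w : E, ∀ τ : ℝ, 0 ≤ τ → τ ≤ 1 →
      g (τ • z + (1 - τ) • w) ≤ (τ : EReal) * g z + ((1 - τ : ℝ) : EReal) * g w)
    {y' : E} (h : IsProxPoint g x y) (h' : IsProxPoint g x y') : y = y' := by
  have := norm_sub_sq_le_inner hproper hbot hconv h h'
  rw [sub_self, inner_zero_left] at this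
  exact sub_eq_zero.1 (norm_eq_zero.1 (pow_eq_zero_iff two_ne_zero |>.1
    (le_antisymm this (sq_nonneg _))))

lemma isMinOn_of_self (hbot : ∀ z, g z ≠ ⊥)
    (hconv : ∀ z w : E, ∀ τ : ℝ, 0 ≤ τ → τ ≤ 1 →
      g (τ • z + (1 - τ) • w) ≤ (τ : EReal) * g z + ((1 - τ : ℝ) : EReal) * g w)
    (h : IsProxPoint g x x) (hx : g x ≠ ⊤) : IsMinOn g Set.univ x :=
  isMinOn_univ_iff.2 fun z => by simpa using h.add_inner_le hbot hconv hx z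

end InnerProductSpace

end IsProxPoint

lemma IsProxOp.not_isFixedPt {E : Type*} [NormedAddCommGroup E] [InnerProductSpace ℝ E]
    {g : E → EReal} {p : E → E} (hproper : ∃ z, g z ≠ ⊤) (hbot : ∀ z, g z ≠ ⊥)
    (hconv : ∀ z w : E, ∀ τ : ℝ, 0 ≤ τ → τ ≤ 1 →
      g (τ • z + (1 - τ) • w) ≤ (τ : EReal) * g z + ((1 - τ : ℝ) : EReal) * g w)
    (hnomin : ¬∃ z, ∀ w, g z ≤ g w) (hp : IsProxOp g p) (x : E) :
    ¬Function.IsFixedPt p x := fun hx => by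
  have h := hp.isProxPoint x
  rw [hx.eq] at h
  exact hnomin ⟨x, isMinOn_univ_iff.1 (h.isMinOn_of_self hbot hconv (h.ne_top hproper hbot))⟩

namespace IsProxOp

variable {f : ℝ → EReal} {p : ℝ → ℝ}

lemma sq_sub_le_mul (hproper : ∃ z, f z ≠ ⊤) (hbot : ∀ z, f z ≠ ⊥)
    (hconv : ∀ z w t : ℝ, 0 ≤ t → t ≤ 1 →
      f (t * z + (1 - t) * w) ≤ (t : EReal) * f z + ((1 - t : ℝ) : EReal) * f w)
    (hp : IsProxOp f p) (s s' : ℝ) : (p s - p s') ^ 2 ≤ (s - s') * (p s - p s') := by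
  simpa only [Real.norm_eq_abs, sq_abs, Real.inner_apply] using
    IsProxPoint.norm_sub_sq_le_inner hproper hbot hconv (hp.isProxPoint s) (hp.isProxPoint s')

lemma monotone (hproper : ∃ z, f z ≠ ⊤) (hbot : ∀ z, f z ≠ ⊥)
    (hconv : ∀ z w t : ℝ, 0 ≤ t → t ≤ 1 →
      f (t * z + (1 - t) * w) ≤ (t : EReal) * f z + ((1 - t : ℝ) : EReal) * f w)
    (hp : IsProxOp f p) : Monotone p := fun s s' hss' => by
  nlinarith [hp.sq_sub_le_mul hproper hbot hconv s s']

lemma lipschitzWith_one (hproper : ∃ z, f z ≠ ⊤) (hbot : ∀ z, f z ≠ ⊥)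
    (hconv : ∀ z w t : ℝ, 0 ≤ t → t ≤ 1 →
      f (t * z + (1 - t) * w) ≤ (t : EReal) * f z + ((1 - t : ℝ) : EReal) * f w)
    (hp : IsProxOp f p) : LipschitzWith 1 p := by
  refine LipschitzWith.of_dist_le_mul fun s s' => ?_
  have h := hp.sq_sub_le_mul hproper hbot hconv s s'
  rw [NNReal.coe_one, one_mul, Real.dist_eq, Real.dist_eq]
  have h' : |p s - p s'| * |p s - p s'| ≤ |s - s'| * |p s - p s'| := by
    rw [abs_mul_abs_self, ← abs_mul, ← sq]
    exact h.trans (le_abs_self _)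
  nlinarith [abs_nonneg (p s - p s'), abs_nonneg (s - s')]

end IsProxOp

theorem tendsto_iterate_atTop_or_atBot {α : Type*} [ConditionallyCompleteLinearOrder α]
    [TopologicalSpace α] [OrderTopology α] {p : α → α} (hmono : Monotone p)
    (hcont : Continuous p) (hfix : ∀ s, ¬Function.IsFixedPt p s) (s : α) :
    Tendsto (fun n => p^[n] s) atTop atTop ∨ Tendsto (fun n => p^[n] s) atTop atBot := by
  rcases le_total s (p s) with hs | hs
  · rcases tendsto_atTop_of_monotone (hmono.monotone_iterate_of_le_map hs) with h | ⟨L, hL⟩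
    · exact .inl h
    · exact absurd (isFixedPt_of_tendsto_iterate hL hcont.continuousAt) (hfix L)
  · rcases tendsto_atTop_of_antitone (hmono.antitone_iterate_of_map_le hs) with h | ⟨L, hL⟩
    · exact .inr h
    · exact absurd (isFixedPt_of_tendsto_iterate hL hcont.continuousAt) (hfix L)

open NormedSpace in
theorem tendsto_normalize_add_smul {V ι : Type*} [NormedAddCommGroup V] [NormedSpace ℝ V]
    {l : Filter ι} {a : V} (ha : a ≠ 0) (v : V) {u : ι → ℝ} (hu : Tendsto u l atTop) :
    Tendsto (fun i => normalize (v + u i • a)) l (𝓝 (normalize a)) := by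
  have hcont : ContinuousAt (normalize : V → V) a :=
    (continuous_norm.continuousAt.inv₀ (norm_ne_zero_iff.2 ha)).smul continuousAt_id
  have hlim : Tendsto (fun i => (u i)⁻¹ • v + a) l (𝓝 a) := by
    simpa using ((tendsto_inv_atTop_zero.comp hu).smul_const v).add_const a
  refine (hcont.tendsto.comp hlim).congr' ?_
  filter_upwards [hu.eventually_gt_atTop 0] with i hi
  rw [Function.comp_apply, ← normalize_smul_of_pos hi, smul_add, smul_inv_smul₀ hi.ne']

open NormedSpace in
theorem exists_tendsto_normalize_add_smul {V ι : Type*} [NormedAddCommGroup V] [NormedSpace ℝ V]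
    {l : Filter ι} {a : V} (ha : ‖a‖ = 1) (v : V) {u : ι → ℝ}
    (hu : Tendsto u l atTop ∨ Tendsto u l atBot) :
    ∃ q, (q = a ∨ q = -a) ∧ Tendsto (fun i => normalize (v + u i • a)) l (𝓝 q) := by
  have ha0 : a ≠ 0 := norm_ne_zero_iff.1 (by rw [ha]; exact one_ne_zero)
  rcases hu with hu | hu
  · refine ⟨a, .inl rfl, ?_⟩
    simpa [normalize_eq_self_of_norm_eq_one ha] using tendsto_normalize_add_smul ha0 v hu
  · refine ⟨-a, .inr rfl, ?_⟩
    simpa [normalize_eq_self_of_norm_eq_one ha] using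
      tendsto_normalize_add_smul (neg_ne_zero.2 ha0) v (tendsto_neg_atBot_atTop.comp hu)

section CompInner

variable {E : Type*} [NormedAddCommGroup E] [InnerProductSpace ℝ E] {a : E} {f : ℝ → EReal}

lemma inner_add_smul_of_norm_eq_one (ha : ‖a‖ = 1) (y : E) (c : ℝ) :
    inner ℝ a (y + c • a) = inner ℝ a y + c := by
  rw [inner_add_right, real_inner_smul_right, real_inner_self_eq_norm_sq, ha, one_pow, mul_one]

lemma IsProxPoint.comp_inner (ha : ‖a‖ = 1) (hbot : ∀ z, f z ≠ ⊥) {y u : E}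
    (h : IsProxPoint (fun x => f (inner ℝ a x)) y u) (hu : f (inner ℝ a u) ≠ ⊤) :
    u = y + (inner ℝ a u - inner ℝ a y) • a ∧ IsProxPoint f (inner ℝ a y) (inner ℝ a u) := by
  set c := inner ℝ a u - inner ℝ a y
  set v := u - y - c • a
  have hav : inner ℝ a v = 0 := by
    simp only [v, c, inner_sub_right, real_inner_smul_right, real_inner_self_eq_norm_sq, ha]
    ring
  have hpyth : ‖y - u‖ ^ 2 = c ^ 2 + ‖v‖ ^ 2 := by
    rw [show y - u = -(c • a + v) by simp only [v]; abel, norm_neg, norm_add_sq_real,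
      real_inner_smul_left, hav, norm_smul, ha, Real.norm_eq_abs, mul_one, sq_abs]
    ring
  have key : ∀ w : ℝ, f (inner ℝ a u) + (((c ^ 2 + ‖v‖ ^ 2) / 2 : ℝ) : EReal)
      ≤ f w + (((inner ℝ a y - w) ^ 2 / 2 : ℝ) : EReal) := by
    intro w
    have hw := h (y + (w - inner ℝ a y) • a)
    beta_reduce at hw
    rwa [hpyth, inner_add_smul_of_norm_eq_one ha, add_sub_cancel, sub_add_cancel_left, norm_neg,
      norm_smul, ha, mul_one, Real.norm_eq_abs, sq_abs, sub_sq_comm w] at hw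
  have hv : v = 0 := by
    have hw := key (inner ℝ a u)
    lift f (inner ℝ a u) to ℝ using ⟨hu, hbot _⟩ with r
    rw [← EReal.coe_add, ← EReal.coe_add, EReal.coe_le_coe_iff, sub_sq_comm (inner ℝ a y)] at hw
    exact norm_eq_zero.1 (pow_eq_zero_iff two_ne_zero |>.1 (by nlinarith [sq_nonneg ‖v‖]))
  refine ⟨by rw [← sub_eq_zero, sub_add_eq_sub_sub]; exact hv, fun w => ?_⟩
  have hw := key w
  rw [hv, norm_zero, zero_pow two_ne_zero, add_zero] at hw
  rwa [Real.norm_eq_abs, Real.norm_eq_abs, sq_abs, sq_abs, sub_sq_comm (inner ℝ a y)]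

lemma exists_isProxOp_comp_inner (ha : ‖a‖ = 1) (hproper : ∃ z, f z ≠ ⊤)
    (hbot : ∀ z, f z ≠ ⊥)
    (hconv : ∀ z w t : ℝ, 0 ≤ t → t ≤ 1 →
      f (t * z + (1 - t) * w) ≤ (t : EReal) * f z + ((1 - t : ℝ) : EReal) * f w)
    {T : E → E} (hT : IsProxOp (fun x => f (inner ℝ a x)) T) :
    ∃ p : ℝ → ℝ, IsProxOp f p ∧ ∀ y, T y = y + (p (inner ℝ a y) - inner ℝ a y) • a := by
  have hsa (s : ℝ) : inner ℝ a (s • a) = s := by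
    simpa using inner_add_smul_of_norm_eq_one ha 0 s
  have hproper' : ∃ z, f (inner ℝ a z) ≠ ⊤ := by
    obtain ⟨z, hz⟩ := hproper
    exact ⟨z • a, by rwa [hsa]⟩
  have hcomp (y : E) := by
    have hfin := (hT.isProxPoint y).ne_top hproper' fun _ => hbot _
    exact (hT.isProxPoint y).comp_inner ha hbot hfin
  refine ⟨fun s => inner ℝ a (T (s • a)), fun s => ?_, fun y => ?_⟩
  · have hs := (hcomp (s • a)).2
    rw [hsa] at hs
    exact hs
  have hy := (hcomp (inner ℝ a y • a)).2
  rw [hsa] at hy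
  beta_reduce
  rw [← (hcomp y).2.unique hproper hbot hconv hy]
  exact (hcomp y).1

lemma iterate_add_smul (ha : ‖a‖ = 1) {T : E → E} {p : ℝ → ℝ}
    (hTp : ∀ y, T y = y + (p (inner ℝ a y) - inner ℝ a y) • a) {v : E} (hv : inner ℝ a v = 0)
    (s : ℝ) (n : ℕ) : T^[n] (v + s • a) = v + p^[n] s • a := by
  have hconj : Function.Semiconj (fun s => v + s • a) p T := fun s => by
    rw [hTp, inner_add_smul_of_norm_eq_one ha, hv, zero_add, add_assoc, ← add_smul,
      add_sub_cancel]
  exact (hconj.iterate_right n s).symm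

end CompInner

theorem stmt19_general (f : ℝ → EReal)
    (hproper : ∃ z : ℝ, f z ≠ ⊤) (hbot : ∀ z : ℝ, f z ≠ ⊥)
    (hconv : ∀ z w t : ℝ, 0 ≤ t → t ≤ 1 →
      f (t * z + (1 - t) * w) ≤ (t : EReal) * f z + ((1 - t : ℝ) : EReal) * f w)
    (hnomin : ¬∃ z : ℝ, ∀ w : ℝ, f z ≤ f w)
    (a : X) (ha : ‖a‖ = 1)
    (F : X → EReal) (hF : ∀ x : X, F x = f (inner ℝ a x))
    (T : X → X) (hT : IsProxOp F T) :
    ∀ x : X, (∀ᶠ n : ℕ in atTop, T^[n] x ≠ 0) ∧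
      ∃ q : X, (q = a ∨ q = -a) ∧
        Tendsto (fun n : ℕ => ‖T^[n] x‖⁻¹ • T^[n] x) atTop (nhds q) := by
  intro x
  obtain rfl : F = fun y => f (inner ℝ a y) := funext hF
  obtain ⟨p, hp, hTp⟩ := exists_isProxOp_comp_inner ha hproper hbot hconv hT
  set s := inner ℝ a x
  have horbit (n : ℕ) : T^[n] x = (x - s • a) + p^[n] s • a := by
    have hv : inner ℝ a (x - s • a) = 0 := by
      rw [inner_sub_right, real_inner_smul_right, real_inner_self_eq_norm_sq, ha]; ring
    simpa only [sub_add_cancel] using iterate_add_smul ha hTp hv s n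
  have hdiv := tendsto_iterate_atTop_or_atBot (hp.monotone hproper hbot hconv)
    (hp.lipschitzWith_one hproper hbot hconv).continuous
    (hp.not_isFixedPt hproper hbot hconv hnomin) s
  obtain ⟨q, hq, hlim⟩ := exists_tendsto_normalize_add_smul ha (x - s • a) hdiv
  simp only [← horbit] at hlim
  refine ⟨?_, q, hq, hlim⟩
  have hq0 : q ≠ 0 := norm_ne_zero_iff.1 (by rcases hq with rfl | rfl <;> simp [ha])
  filter_upwards [hlim.eventually_ne hq0] with n hn
  rwa [Ne, NormedSpace.normalize_eq_zero_iff] at hn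

/-- Let `f : ℝ → ℝ ∪ {+∞}` be proper, convex, lower semicontinuous,
bounded below and without minimizer, `‖a‖ = 1`, `F x = f ⟪a, x⟫`, and `T = prox_F`.
Then for every `x` the normalized iterates `Tⁿx/‖Tⁿx‖` are eventually well defined
and converge to `a` or to `−a`. -/
theorem stmt19 (f : ℝ → EReal)
    (hproper : ∃ z : ℝ, f z ≠ ⊤) (hbot : ∀ z : ℝ, f z ≠ ⊥)
    (hconv : ∀ z w t : ℝ, 0 ≤ t → t ≤ 1 →
      f (t * z + (1 - t) * w) ≤ (t : EReal) * f z + ((1 - t : ℝ) : EReal) * f w)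
    (hlsc : LowerSemicontinuous f)
    (hbdd : ∃ m : ℝ, ∀ z : ℝ, (m : EReal) ≤ f z)
    (hnomin : ¬∃ z : ℝ, ∀ w : ℝ, f z ≤ f w)
    (a : X) (ha : ‖a‖ = 1)
    (F : X → EReal) (hF : ∀ x : X, F x = f (inner ℝ a x))
    (T : X → X) (hT : IsProxOp F T) :
    ∀ x : X, (∀ᶠ n : ℕ in atTop, T^[n] x ≠ 0) ∧
      ∃ q : X, (q = a ∨ q = -a) ∧
        Tendsto (fun n : ℕ => ‖T^[n] x‖⁻¹ • T^[n] x) atTop (nhds q) :=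
  stmt19_general f hproper hbot hconv hnomin a ha F hF T hT
end
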